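/- arXiv:1207.1860 — 15 statements merged into one kernel-verified Lean document; each statement's English description precedes it below -/
import Mathlib

section
/- In an error-free perfect secrecy system, for every ciphertext value x, the probability P_X(x) is at most 1/|U|, where |U| is the size of the support of the message U. -/
open Finset

open scoped Classical in
/-- In an error-free perfect secrecy system, every ciphertext probability is
at most `1/|𝒰|` where `𝒰` is the support of the message `U`. -/
theorem stmt_0 {𝒰 ℛ 𝒳 : Type*} [Fintype 𝒰] [Fintype ℛ] [Fintype 𝒳]
    (p : 𝒰 → ℛ → 𝒳 → ℝ)
    (hnn : ∀ u r x, 0 ≤ p u r x)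
    (hsum : ∑ u, ∑ r, ∑ x, p u r x = 1)
    -- perfect secrecy `I(U;X) = 0` : `U` and `X` are independent
    (hIUX : ∀ u x, (∑ r, p u r x)
      = (∑ r, ∑ x', p u r x') * (∑ u', ∑ r, p u' r x))
    -- key independence `I(U;R) = 0`
    (hIUR : ∀ u r, (∑ x, p u r x)
      = (∑ r', ∑ x, p u r' x) * (∑ u', ∑ x, p u' r x))
    -- error-free decoding `H(U|R,X) = 0`
    (hdet : ∃ g : ℛ → 𝒳 → 𝒰, ∀ u r x, p u r x ≠ 0 → u = g r x)
    (x : 𝒳) :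
    (∑ u, ∑ r, p u r x)
      ≤ 1 / ((univ.filter fun u => (∑ r, ∑ x', p u r x') ≠ 0).card : ℝ) := by
  obtain ⟨g, hg⟩ := hdet
  set PU : 𝒰 → ℝ := fun u => ∑ r, ∑ x', p u r x' with hPUdef
  set PR : ℛ → ℝ := fun r => ∑ u', ∑ x', p u' r x' with hPRdef
  set PX : ℝ := ∑ u, ∑ r, p u r x with hPXdef
  set S : Finset 𝒰 := univ.filter fun u => PU u ≠ 0 with hSdef
  have hPUnn : ∀ u, 0 ≤ PU u := fun u =>
    Finset.sum_nonneg fun r _ => Finset.sum_nonneg fun x' _ => hnn u r x'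
  have hPRnn : ∀ r, 0 ≤ PR r := fun r =>
    Finset.sum_nonneg fun u _ => Finset.sum_nonneg fun x' _ => hnn u r x'
  have hPXnn : 0 ≤ PX :=
    Finset.sum_nonneg fun u _ => Finset.sum_nonneg fun r _ => hnn u r x
  have hsumPU : ∑ u, PU u = 1 := hsum
  have hsumPR : ∑ r, PR r = 1 := by
    rw [← hsum, Finset.sum_comm]
  have hSne : S.Nonempty := by
    by_contra h
    rw [Finset.not_nonempty_iff_eq_empty] at h
    have : ∑ u, PU u = 0 := by
      apply Finset.sum_eq_zero
      intro u _
      by_contra hu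
      have : u ∈ S := by simp [hSdef, hu]
      simp [h] at this
    rw [hsumPU] at this
    norm_num at this
  have hScard : (0 : ℝ) < S.card := by
    exact_mod_cast Finset.card_pos.mpr hSne
  -- key inequality: for each u in S, PX ≤ ∑ over r decoding to u of PR r
  have key : ∀ u ∈ S, PX ≤ ∑ r ∈ univ.filter (fun r => g r x = u), PR r := by
    intro u hu
    have hPUu : 0 < PU u := by
      rcases (hPUnn u).lt_or_eq with h | h
      · exact h
      · exfalso; simp [hSdef, ← h] at hu
    have step1 : PU u * PX = ∑ r ∈ univ.filter (fun r => g r x = u), p u r x := by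
      rw [← hIUX u x]
      rw [Finset.sum_filter_of_ne]
      intro r _ h
      exact (hg u r x h).symm
    have step2 : ∑ r ∈ univ.filter (fun r => g r x = u), p u r x
        ≤ ∑ r ∈ univ.filter (fun r => g r x = u), PU u * PR r := by
      apply Finset.sum_le_sum
      intro r _
      calc p u r x ≤ ∑ x', p u r x' :=
            Finset.single_le_sum (fun x' _ => hnn u r x') (Finset.mem_univ x)
        _ = PU u * PR r := hIUR u r
    have : PU u * PX ≤ PU u * ∑ r ∈ univ.filter (fun r => g r x = u), PR r := by
      calc PU u * PX = _ := step1
        _ ≤ ∑ r ∈ univ.filter (fun r => g r x = u), PU u * PR r := step2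
        _ = PU u * ∑ r ∈ univ.filter (fun r => g r x = u), PR r :=
            (Finset.mul_sum _ _ _).symm
    exact le_of_mul_le_mul_left this hPUu
  have main : (S.card : ℝ) * PX ≤ 1 := by
    calc (S.card : ℝ) * PX = ∑ _u ∈ S, PX := by
          rw [Finset.sum_const, nsmul_eq_mul]
      _ ≤ ∑ u ∈ S, ∑ r ∈ univ.filter (fun r => g r x = u), PR r :=
          Finset.sum_le_sum key
      _ = ∑ u ∈ S, ∑ r, if g r x = u then PR r else 0 := by
          apply Finset.sum_congr rfl
          intro u _
          rw [Finset.sum_filter]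
      _ = ∑ r, ∑ u ∈ S, if g r x = u then PR r else 0 := Finset.sum_comm
      _ ≤ ∑ r, PR r := by
          apply Finset.sum_le_sum
          intro r _
          rw [Finset.sum_ite_eq]
          split <;> simp [hPRnn r]
      _ = 1 := hsumPR
  rw [le_div_iff₀ hScard]
  linarith [main]
end

section
/- In an error-free perfect secrecy system, for every key value r, the probability P_R(r) is at most 1/|U|. -/
open Finset

open scoped Classical in
/-- In an error-free perfect secrecy system, every key probability is
at most `1/|𝒰|` where `𝒰` is the support of the message `U`. -/
theorem stmt_1 {𝒰 ℛ 𝒳 : Type*} [Fintype 𝒰] [Fintype ℛ] [Fintype 𝒳]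
    (p : 𝒰 → ℛ → 𝒳 → ℝ)
    (hnn : ∀ u r x, 0 ≤ p u r x)
    (hsum : ∑ u, ∑ r, ∑ x, p u r x = 1)
    -- perfect secrecy `I(U;X) = 0`
    (hIUX : ∀ u x, (∑ r, p u r x)
      = (∑ r, ∑ x', p u r x') * (∑ u', ∑ r, p u' r x))
    -- key independence `I(U;R) = 0`
    (hIUR : ∀ u r, (∑ x, p u r x)
      = (∑ r', ∑ x, p u r' x) * (∑ u', ∑ x, p u' r x))
    -- error-free decoding `H(U|R,X) = 0`
    (hdet : ∃ g : ℛ → 𝒳 → 𝒰, ∀ u r x, p u r x ≠ 0 → u = g r x)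
    (r : ℛ) :
    (∑ u, ∑ x, p u r x)
      ≤ 1 / ((univ.filter fun u => (∑ r', ∑ x, p u r' x) ≠ 0).card : ℝ) := by
  obtain ⟨g, hg⟩ := hdet
  set Pu : 𝒰 → ℝ := fun u => ∑ r', ∑ x, p u r' x with hPu
  set PR : ℝ := ∑ u, ∑ x, p u r x with hPR
  set Px : 𝒳 → ℝ := fun x => ∑ u', ∑ r', p u' r' x with hPx
  set S : Finset 𝒰 := univ.filter fun u => Pu u ≠ 0 with hS
  set T : 𝒰 → Finset 𝒳 := fun u => univ.filter fun x => p u r x ≠ 0 with hT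
  have hPxnn : ∀ x, 0 ≤ Px x := fun x => by
    apply Finset.sum_nonneg; intro u _; exact Finset.sum_nonneg fun r' _ => hnn u r' x
  have key : ∀ u ∈ S, PR ≤ ∑ x ∈ T u, Px x := by
    intro u hu
    have hne : Pu u ≠ 0 := (mem_filter.mp hu).2
    have hPuPos : 0 < Pu u := lt_of_le_of_ne
      (Finset.sum_nonneg fun r' _ => Finset.sum_nonneg fun x _ => hnn u r' x) (Ne.symm hne)
    have h1 : Pu u * PR = ∑ x ∈ T u, p u r x := by
      rw [← hIUR u r, hT]
      rw [Finset.sum_filter_ne_zero]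
    have h2 : ∀ x, p u r x ≤ Pu u * Px x := by
      intro x
      calc p u r x ≤ ∑ r', p u r' x :=
            Finset.single_le_sum (fun r' _ => hnn u r' x) (mem_univ r)
        _ = Pu u * Px x := by
            have := hIUX u x
            simpa [hPu, hPx, mul_comm] using this
    have h3 : Pu u * PR ≤ Pu u * ∑ x ∈ T u, Px x := by
      rw [h1, Finset.mul_sum]
      exact Finset.sum_le_sum fun x _ => h2 x
    exact le_of_mul_le_mul_left h3 hPuPos
  have hdisj : (S : Set 𝒰).PairwiseDisjoint T := by
    intro u hu v hv huv
    simp only [Finset.disjoint_left]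
    intro x hx hx'
    have h1 := hg u r x (by simpa [hT] using (mem_filter.mp hx).2)
    have h2 := hg v r x (by simpa [hT] using (mem_filter.mp hx').2)
    exact huv (h1.trans h2.symm)
  have hPxsum : ∑ x, Px x = 1 := by
    rw [← hsum]
    rw [Finset.sum_comm]
    apply Finset.sum_congr rfl
    intro x _
    exact Finset.sum_comm
  have hbig : ∑ u ∈ S, ∑ x ∈ T u, Px x ≤ 1 := by
    rw [← Finset.sum_biUnion hdisj, ← hPxsum]
    exact Finset.sum_le_sum_of_subset_of_nonneg (Finset.subset_univ _)
      fun x _ _ => hPxnn x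
  have hcard : 0 < S.card := by
    rcases Finset.eq_empty_or_nonempty S with h | h
    · exfalso
      have : ∀ u, Pu u = 0 := by
        intro u
        by_contra hne
        have : u ∈ S := mem_filter.mpr ⟨mem_univ u, hne⟩
        simp [h] at this
      have : (∑ u, ∑ r', ∑ x, p u r' x) = 0 := by
        apply Finset.sum_eq_zero; intro u _; exact this u
      rw [hsum] at this; norm_num at this
    · exact Finset.card_pos.mpr h
  have hfin : (S.card : ℝ) * PR ≤ 1 := by
    calc (S.card : ℝ) * PR = ∑ _u ∈ S, PR := by
          rw [Finset.sum_const, nsmul_eq_mul]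
      _ ≤ ∑ u ∈ S, ∑ x ∈ T u, Px x := Finset.sum_le_sum key
      _ ≤ 1 := hbig
  have hcpos : (0:ℝ) < (S.card : ℝ) := by exact_mod_cast hcard
  rw [le_div_iff₀ hcpos]
  linarith [hfin]
end

section
/- In an error-free perfect secrecy system, the Shannon entropy of the ciphertext satisfies H(X) ≥ log|𝒰|, with equality if and only if X is uniformly distributed with P_X(x)=1/|𝒰| for all x in its support. -/
open Finset

/-- Shannon entropy of a finitely supported probability mass function. -/
noncomputable def ent {α : Type*} [Fintype α] (q : α → ℝ) : ℝ :=
  ∑ a, Real.negMulLog (q a)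

/-!
Perfect secrecy (`U ⊥ X`, `U ⊥ R`) together with decodability (`U = g(R, X)`) forces every
ciphertext to be rare: for a fixed `x` and each `u` in the support of `U`,
`P_U(u) P_X(x) = ∑_{r : g r x = u} P(u, r, x) ≤ P_U(u) P_R(g(·, x)⁻¹ u)`, and the fibres
`g(·, x)⁻¹ u` are disjoint, so `|supp U| · P_X(x) ≤ ∑_r P_R(r) = 1`. A distribution bounded
by `1/N` has entropy at least `log N`, with equality exactly when it is uniform on its support.
-/

section EntropyBound

open Real

lemma mul_log_le_negMulLog {t N : ℝ} (hN : 0 < N) (ht : 0 ≤ t) (htN : t ≤ 1 / N) :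
    t * log N ≤ negMulLog t := by
  rcases ht.eq_or_lt with rfl | ht
  · simp
  have hlog : log (t * N) ≤ 0 :=
    log_nonpos (by positivity) (by rwa [le_div_iff₀ hN] at htN)
  rw [log_mul ht.ne' hN.ne'] at hlog
  rw [negMulLog]
  nlinarith

lemma negMulLog_eq_mul_log_iff {t N : ℝ} (hN : 0 < N) (ht : 0 ≤ t) :
    negMulLog t = t * log N ↔ t = 0 ∨ t = 1 / N := by
  rcases ht.eq_or_lt with rfl | ht
  · simp
  rw [negMulLog, neg_mul, ← mul_neg, mul_right_inj' ht.ne', ← log_inv,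
    log_injOn_pos.eq_iff (inv_pos.mpr ht) hN, inv_eq_iff_eq_inv, one_div]
  simp [ht.ne']

variable {α : Type*} [Fintype α] {q : α → ℝ} {N : ℝ}

lemma log_le_ent_of_le_one_div (hN : 0 < N) (hq0 : ∀ a, 0 ≤ q a) (hq1 : ∑ a, q a = 1)
    (hqN : ∀ a, q a ≤ 1 / N) : log N ≤ ent q :=
  calc log N = ∑ a, q a * log N := by rw [← sum_mul, hq1, one_mul]
    _ ≤ ent q := sum_le_sum fun a _ => mul_log_le_negMulLog hN (hq0 a) (hqN a)

lemma ent_eq_log_iff_of_le_one_div (hN : 0 < N) (hq0 : ∀ a, 0 ≤ q a) (hq1 : ∑ a, q a = 1)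
    (hqN : ∀ a, q a ≤ 1 / N) : ent q = log N ↔ ∀ a, q a ≠ 0 → q a = 1 / N := by
  have hlogN : log N = ∑ a, q a * log N := by rw [← sum_mul, hq1, one_mul]
  rw [hlogN, eq_comm, ent,
    sum_eq_sum_iff_of_le fun a _ => mul_log_le_negMulLog hN (hq0 a) (hqN a)]
  simp only [mem_univ, true_implies, eq_comm (a := q _ * log N),
    negMulLog_eq_mul_log_iff hN (hq0 _), or_iff_not_imp_left]

end EntropyBound

section PerfectSecrecy

variable {𝒰 ℛ 𝒳 : Type*} [Fintype 𝒰] [Fintype ℛ] [Fintype 𝒳] {p : 𝒰 → ℛ → 𝒳 → ℝ}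

lemma marginal_le_sum_fiber [DecidableEq 𝒰] (hnn : ∀ u r x, 0 ≤ p u r x) {g : ℛ → 𝒳 → 𝒰}
    {u : 𝒰} (x : 𝒳) (hu : ∑ r, ∑ x, p u r x ≠ 0)
    (hIUX : (∑ r, p u r x) = (∑ r, ∑ x', p u r x') * (∑ u', ∑ r, p u' r x))
    (hIUR : ∀ r, (∑ x, p u r x) = (∑ r', ∑ x, p u r' x) * (∑ u', ∑ x, p u' r x))
    (hg : ∀ r, p u r x ≠ 0 → u = g r x) :
    ∑ u', ∑ r, p u' r x ≤ ∑ r with g r x = u, ∑ u', ∑ x', p u' r x' := by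
  have hpos : 0 < ∑ r, ∑ x, p u r x :=
    (sum_nonneg fun r _ => sum_nonneg fun x _ => hnn u r x).lt_of_ne' hu
  refine le_of_mul_le_mul_left ?_ hpos
  calc (∑ r, ∑ x, p u r x) * ∑ u', ∑ r, p u' r x
      = ∑ r with g r x = u, p u r x :=
        hIUX ▸ (sum_filter_of_ne fun r _ h => (hg r h).symm).symm
    _ ≤ ∑ r with g r x = u, ∑ x', p u r x' :=
        sum_le_sum fun r _ => single_le_sum (fun x' _ => hnn u r x') (mem_univ x)
    _ = (∑ r, ∑ x, p u r x) * ∑ r with g r x = u, ∑ u', ∑ x', p u' r x' := by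
        rw [mul_sum]
        exact sum_congr rfl fun r _ => hIUR r

open scoped Classical in
lemma card_support_mul_marginal_le_one (hnn : ∀ u r x, 0 ≤ p u r x)
    (hsum : ∑ u, ∑ r, ∑ x, p u r x = 1)
    (hIUX : ∀ u x, (∑ r, p u r x) = (∑ r, ∑ x', p u r x') * (∑ u', ∑ r, p u' r x))
    (hIUR : ∀ u r, (∑ x, p u r x) = (∑ r', ∑ x, p u r' x) * (∑ u', ∑ x, p u' r x))
    {g : ℛ → 𝒳 → 𝒰} (hg : ∀ u r x, p u r x ≠ 0 → u = g r x) (x : 𝒳) :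
    ((univ.filter fun u => (∑ r, ∑ x, p u r x) ≠ 0).card : ℝ) * ∑ u, ∑ r, p u r x ≤ 1 := by
  have hpR : ∀ r, 0 ≤ ∑ u, ∑ x, p u r x :=
    fun r => sum_nonneg fun u _ => sum_nonneg fun x _ => hnn u r x
  calc _ = ∑ u with (∑ r, ∑ x, p u r x) ≠ 0, ∑ u', ∑ r, p u' r x := by
        rw [sum_const, nsmul_eq_mul]
    _ ≤ ∑ u with (∑ r, ∑ x, p u r x) ≠ 0, ∑ r with g r x = u, ∑ u', ∑ x', p u' r x' :=
        sum_le_sum fun u hu => marginal_le_sum_fiber hnn x (mem_filter.mp hu).2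
          (hIUX u x) (hIUR u) (fun r => hg u r x)
    _ ≤ ∑ r, ∑ u, ∑ x, p u r x :=
        sum_fiberwise_le_sum_of_sum_fiber_nonneg fun u _ => sum_nonneg fun r _ => hpR r
    _ = 1 := by rw [← hsum, sum_comm]

end PerfectSecrecy

open scoped Classical in
/-- In an error-free perfect secrecy system, `H(X) ≥ log |𝒰|`, with equality
iff `X` is uniform with mass `1/|𝒰|` on its support. -/
theorem stmt_2 {𝒰 ℛ 𝒳 : Type*} [Fintype 𝒰] [Fintype ℛ] [Fintype 𝒳]
    (p : 𝒰 → ℛ → 𝒳 → ℝ)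
    (hnn : ∀ u r x, 0 ≤ p u r x)
    (hsum : ∑ u, ∑ r, ∑ x, p u r x = 1)
    (hIUX : ∀ u x, (∑ r, p u r x)
      = (∑ r, ∑ x', p u r x') * (∑ u', ∑ r, p u' r x))
    (hIUR : ∀ u r, (∑ x, p u r x)
      = (∑ r', ∑ x, p u r' x) * (∑ u', ∑ x, p u' r x))
    (hdet : ∃ g : ℛ → 𝒳 → 𝒰, ∀ u r x, p u r x ≠ 0 → u = g r x) :
    Real.log ((univ.filter fun u => (∑ r, ∑ x, p u r x) ≠ 0).card)
        ≤ ent (fun x => ∑ u, ∑ r, p u r x)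
      ∧ (ent (fun x => ∑ u, ∑ r, p u r x)
          = Real.log ((univ.filter fun u => (∑ r, ∑ x, p u r x) ≠ 0).card)
        ↔ ∀ x, (∑ u, ∑ r, p u r x) ≠ 0 →
            (∑ u, ∑ r, p u r x)
              = 1 / ((univ.filter fun u => (∑ r, ∑ x, p u r x) ≠ 0).card : ℝ)) := by
  obtain ⟨g, hg⟩ := hdet
  have hsupp : (univ.filter fun u => (∑ r, ∑ x, p u r x) ≠ 0).Nonempty := by
    by_contra h
    rw [not_nonempty_iff_eq_empty, filter_eq_empty_iff] at h
    simp only [mem_univ, ne_eq, not_not, true_implies] at h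
    simp [h] at hsum
  have hN : (0 : ℝ) < (univ.filter fun u => (∑ r, ∑ x, p u r x) ≠ 0).card := by
    exact_mod_cast hsupp.card_pos
  have hpX : ∀ x, 0 ≤ ∑ u, ∑ r, p u r x :=
    fun x => sum_nonneg fun u _ => sum_nonneg fun r _ => hnn u r x
  have hpX1 : ∑ x, ∑ u, ∑ r, p u r x = 1 := by
    rw [← hsum, sum_comm]
    exact sum_congr rfl fun u _ => sum_comm
  have hub : ∀ x, ∑ u, ∑ r, p u r x
      ≤ 1 / ((univ.filter fun u => (∑ r, ∑ x, p u r x) ≠ 0).card : ℝ) := fun x => by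
    rw [le_div_iff₀ hN, mul_comm]
    exact card_support_mul_marginal_le_one hnn hsum hIUX hIUR hg x
  exact ⟨log_le_ent_of_le_one_div hN hpX hpX1 hub,
    ent_eq_log_iff_of_le_one_div hN hpX hpX1 hub⟩
end

section
/- No error-free perfect secrecy system exists when the message U has countably infinite support: there are no random variables R, X with I(U;X)=0, H(U|RX)=0, I(U;R)=0 when the support of U is infinite. -/
open scoped ENNReal

/-- No error-free perfect secrecy system exists when the message `U` has
(countably) infinite support. -/
theorem stmt_5 {𝒰 ℛ 𝒳 : Type*} [Countable 𝒰] [Countable ℛ] [Countable 𝒳]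
    (p : 𝒰 → ℛ → 𝒳 → ℝ≥0∞)
    (hsum : ∑' u, ∑' r, ∑' x, p u r x = 1)
    -- perfect secrecy: `X` independent of `U`
    (hIUX : ∀ u x, (∑' r, p u r x)
      = (∑' r, ∑' x', p u r x') * (∑' u', ∑' r, p u' r x))
    -- key independence: `R` independent of `U`
    (hIUR : ∀ u r, (∑' x, p u r x)
      = (∑' r', ∑' x, p u r' x) * (∑' u', ∑' x, p u' r x))
    -- error-free decoding: `U` is a function of `(R,X)` almost surely
    (hdet : ∃ g : ℛ → 𝒳 → 𝒰, ∀ u r x, p u r x ≠ 0 → u = g r x)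
    -- the support of `U` is infinite
    (hinf : {u : 𝒰 | (∑' r, ∑' x, p u r x) ≠ 0}.Infinite) :
    False := by
  classical
  obtain ⟨g, hg⟩ := hdet
  set pU : 𝒰 → ℝ≥0∞ := fun u => ∑' r, ∑' x, p u r x with hpU
  set pR : ℛ → ℝ≥0∞ := fun r => ∑' u, ∑' x, p u r x with hpR
  set pX : 𝒳 → ℝ≥0∞ := fun x => ∑' u, ∑' r, p u r x with hpX
  have hsumU : ∑' u, pU u = 1 := hsum
  have hsumR : ∑' r, pR r = 1 := by
    rw [hpR, ENNReal.tsum_comm]; exact hsum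
  have hsumX : ∑' x, pX x = 1 := by
    rw [hpX, ENNReal.tsum_comm]
    rw [← hsum]
    exact tsum_congr fun u => ENNReal.tsum_comm
  -- choose r0 with pR r0 ≠ 0
  have hr0 : ∃ r0, pR r0 ≠ 0 := by
    by_contra h
    push_neg at h
    simp only [h, tsum_zero] at hsumR
    exact zero_ne_one hsumR
  obtain ⟨r0, hr0⟩ := hr0
  -- the T function
  set T : 𝒰 → ℝ≥0∞ := fun u => ∑' x, if g r0 x = u then pX x else 0 with hT
  -- key inequality
  have key : ∀ u, pU u ≠ 0 → pR r0 ≤ T u := by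
    intro u hu
    have hUfin : pU u ≠ ∞ := by
      have : pU u ≤ 1 := hsumU ▸ ENNReal.le_tsum u
      exact ne_top_of_le_ne_top ENNReal.one_ne_top this
    have h2 : ∀ x, p u r0 x ≤ if g r0 x = u then pU u * pX x else 0 := by
      intro x
      by_cases hx : p u r0 x = 0
      · simp [hx]
      · rw [if_pos (hg u r0 x hx).symm]
        calc p u r0 x ≤ ∑' r, p u r x := ENNReal.le_tsum r0
          _ = pU u * pX x := hIUX u x
    have h3 : pU u * pR r0 ≤ pU u * T u := by
      calc pU u * pR r0 = ∑' x, p u r0 x := (hIUR u r0).symm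
        _ ≤ ∑' x, (if g r0 x = u then pU u * pX x else 0) := ENNReal.tsum_le_tsum h2
        _ = ∑' x, pU u * (if g r0 x = u then pX x else 0) := by
            exact tsum_congr fun x => by rw [mul_ite, mul_zero]
        _ = pU u * T u := ENNReal.tsum_mul_left
    exact (ENNReal.mul_le_mul_iff_right hu hUfin).mp h3
  -- sum of T is 1
  have hTsum : ∑' u, T u = 1 := by
    rw [hT]
    calc ∑' u, ∑' x, (if g r0 x = u then pX x else 0)
        = ∑' x, ∑' u, (if g r0 x = u then pX x else 0) := ENNReal.tsum_comm
      _ = ∑' x, pX x := tsum_congr fun x => by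
          rw [tsum_eq_single (g r0 x) (fun u hu => if_neg (Ne.symm hu))]
          simp
      _ = 1 := hsumX
  -- contradiction via infinite sum
  set S : Set 𝒰 := {u : 𝒰 | pU u ≠ 0} with hS
  haveI : Infinite S := hinf.to_subtype
  have htop : (⊤ : ℝ≥0∞) ≤ 1 := by
    calc (⊤ : ℝ≥0∞) = ∑' _ : S, pR r0 := (ENNReal.tsum_const_eq_top_of_ne_zero hr0).symm
      _ ≤ ∑' u : S, T u := ENNReal.tsum_le_tsum fun u => key u u.2
      _ = ∑' u, S.indicator T u := tsum_subtype S T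
      _ ≤ ∑' u, T u := ENNReal.tsum_le_tsum fun u => Set.indicator_le_self S T u
      _ = 1 := hTsum
  exact absurd htop (by simp)
end

section
/- Consider a two-round system where the key R encrypts U into X and then V into Y. If I(UV;XY)=0, H(U|RX)=0, and H(V|RXY)=0, then H(V|U) ≤ H(R|UX). -/
private lemma rot3 {α β γ : Type*} [Fintype α] [Fintype β] [Fintype γ] (f : α → β → γ → ℝ) :
    ∑ a, ∑ b, ∑ c, f a b c = ∑ b, ∑ c, ∑ a, f a b c := by
  rw [Finset.sum_comm]
  exact Finset.sum_congr rfl fun b _ => Finset.sum_comm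

private lemma kl_pt {f g : ℝ} (hf : 0 ≤ f) (hg : 0 ≤ g) (h : f ≠ 0 → g ≠ 0) :
    f * Real.log g - f * Real.log f ≤ g - f := by
  rcases eq_or_lt_of_le hf with hf0 | hf0
  · simp [← hf0, hg]
  · have hg0 : 0 < g := lt_of_le_of_ne hg (Ne.symm (h hf0.ne'))
    have hlog : Real.log (g / f) ≤ g / f - 1 := Real.log_le_sub_one_of_pos (by positivity)
    rw [Real.log_div hg0.ne' hf0.ne'] at hlog
    have h2 := mul_le_mul_of_nonneg_left hlog hf
    rw [mul_sub, mul_sub, mul_div_cancel₀ _ hf0.ne', mul_one] at h2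
    linarith

private lemma subadd_negMulLog {ι : Type*} (s : Finset ι) (a : ι → ℝ) (ha : ∀ i ∈ s, 0 ≤ a i) :
    Real.negMulLog (∑ i ∈ s, a i) ≤ ∑ i ∈ s, Real.negMulLog (a i) := by
  have hS : Real.negMulLog (∑ i ∈ s, a i)
      = ∑ i ∈ s, -(a i * Real.log (∑ j ∈ s, a j)) := by
    simp [Real.negMulLog, Finset.sum_mul]
  rw [hS]
  refine Finset.sum_le_sum fun i hi => ?_
  rcases eq_or_lt_of_le (ha i hi) with h0 | h0
  · simp [Real.negMulLog, ← h0]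
  · have hle : a i ≤ ∑ j ∈ s, a j := Finset.single_le_sum ha hi
    have hlog := Real.log_le_log h0 hle
    simp only [Real.negMulLog]
    nlinarith

private lemma entmul22 {A B C D : Type*} [Fintype A] [Fintype B] [Fintype C] [Fintype D]
    (a : A → B → ℝ) (b : C → D → ℝ) :
    ∑ i, ∑ j, ∑ k, ∑ l, Real.negMulLog (a i j * b k l)
      = (∑ k, ∑ l, b k l) * (∑ i, ∑ j, Real.negMulLog (a i j))
        + (∑ i, ∑ j, a i j) * (∑ k, ∑ l, Real.negMulLog (b k l)) := by
  simp only [Real.negMulLog_mul, Finset.sum_add_distrib, ← Finset.sum_mul, ← Finset.mul_sum]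

private lemma entmul12 {A C D : Type*} [Fintype A] [Fintype C] [Fintype D]
    (a : A → ℝ) (b : C → D → ℝ) :
    ∑ i, ∑ k, ∑ l, Real.negMulLog (a i * b k l)
      = (∑ k, ∑ l, b k l) * (∑ i, Real.negMulLog (a i))
        + (∑ i, a i) * (∑ k, ∑ l, Real.negMulLog (b k l)) := by
  simp only [Real.negMulLog_mul, Finset.sum_add_distrib, ← Finset.sum_mul, ← Finset.mul_sum]

/-- Two-round system: key `R` encrypts `U` into `X` and then `V` into `Y`.
If `I(UV;XY) = 0`, `H(U|RX) = 0` and `H(V|RXY) = 0`, then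
`H(V|U) ≤ H(R|UX)`. -/
theorem stmt_7 {𝒰 𝒱 ℛ 𝒳 𝒴 : Type*}
    [Fintype 𝒰] [Fintype 𝒱] [Fintype ℛ] [Fintype 𝒳] [Fintype 𝒴]
    (p : 𝒰 → 𝒱 → ℛ → 𝒳 → 𝒴 → ℝ)
    (hnn : ∀ u v r x y, 0 ≤ p u v r x y)
    (hsum : ∑ u, ∑ v, ∑ r, ∑ x, ∑ y, p u v r x y = 1)
    -- perfect secrecy over both rounds: `(U,V)` independent of `(X,Y)`
    (hIUVXY : ∀ u v x y, (∑ r, p u v r x y)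
      = (∑ r, ∑ x', ∑ y', p u v r x' y') * (∑ u', ∑ v', ∑ r, p u' v' r x y))
    -- `H(U|RX) = 0` : `U` is determined by `(R,X)`
    (hdetU : ∃ g : ℛ → 𝒳 → 𝒰, ∀ u v r x y, p u v r x y ≠ 0 → u = g r x)
    -- `H(V|RXY) = 0` : `V` is determined by `(R,X,Y)`
    (hdetV : ∃ h : ℛ → 𝒳 → 𝒴 → 𝒱, ∀ u v r x y, p u v r x y ≠ 0 → v = h r x y) :
    -- `H(V|U) ≤ H(R|UX)`
    ent (fun t : 𝒰 × 𝒱 => ∑ r, ∑ x, ∑ y, p t.1 t.2 r x y)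
        - ent (fun u : 𝒰 => ∑ v, ∑ r, ∑ x, ∑ y, p u v r x y)
      ≤ ent (fun t : 𝒰 × ℛ × 𝒳 => ∑ v, ∑ y, p t.1 v t.2.1 t.2.2 y)
        - ent (fun t : 𝒰 × 𝒳 => ∑ v, ∑ r, ∑ y, p t.1 v r t.2 y) := by
  classical
  clear hdetU
  obtain ⟨hV, hhV⟩ := hdetV
  simp only [ent, Fintype.sum_prod_type]
  set P4 : 𝒰 → ℛ → 𝒳 → 𝒴 → ℝ := fun u r x y => ∑ v, p u v r x y with hP4def
  set q4 : 𝒰 → 𝒱 → 𝒳 → 𝒴 → ℝ := fun u v x y => ∑ r, p u v r x y with hq4def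
  set q3 : 𝒰 → 𝒳 → 𝒴 → ℝ := fun u x y => ∑ v, ∑ r, p u v r x y with hq3def
  set PURX : 𝒰 → ℛ → 𝒳 → ℝ := fun u r x => ∑ v, ∑ y, p u v r x y with hPURXdef
  set PUX : 𝒰 → 𝒳 → ℝ := fun u x => ∑ v, ∑ r, ∑ y, p u v r x y with hPUXdef
  set quv : 𝒰 → 𝒱 → ℝ := fun u v => ∑ r, ∑ x, ∑ y, p u v r x y with hquvdef
  set qu : 𝒰 → ℝ := fun u => ∑ v, ∑ r, ∑ x, ∑ y, p u v r x y with hqudef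
  set qxy : 𝒳 → 𝒴 → ℝ := fun x y => ∑ u, ∑ v, ∑ r, p u v r x y with hqxydef
  show (∑ u, ∑ v, Real.negMulLog (quv u v)) - (∑ u, Real.negMulLog (qu u))
      ≤ (∑ u, ∑ r, ∑ x, Real.negMulLog (PURX u r x))
        - (∑ u, ∑ x, Real.negMulLog (PUX u x))
  -- nonnegativity of marginals
  have hP4nn : ∀ u r x y, 0 ≤ P4 u r x y := fun u r x y =>
    Finset.sum_nonneg fun _ _ => hnn _ _ _ _ _
  have hq3nn : ∀ u x y, 0 ≤ q3 u x y := fun u x y =>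
    Finset.sum_nonneg fun _ _ => Finset.sum_nonneg fun _ _ => hnn _ _ _ _ _
  have hPURXnn : ∀ u r x, 0 ≤ PURX u r x := fun u r x =>
    Finset.sum_nonneg fun _ _ => Finset.sum_nonneg fun _ _ => hnn _ _ _ _ _
  have hPUXnn : ∀ u x, 0 ≤ PUX u x := fun u x =>
    Finset.sum_nonneg fun _ _ => Finset.sum_nonneg fun _ _ =>
      Finset.sum_nonneg fun _ _ => hnn _ _ _ _ _
  -- marginal identities
  have idq3 : ∀ u x y, q3 u x y = ∑ r, P4 u r x y := fun u x y => Finset.sum_comm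
  have idPURX : ∀ u r x, PURX u r x = ∑ y, P4 u r x y := fun u r x => Finset.sum_comm
  have idPUX : ∀ u x, PUX u x = ∑ r, ∑ y, P4 u r x y := fun u x =>
    rot3 fun v r y => p u v r x y
  have idq3y : ∀ u x, (∑ y, q3 u x y) = PUX u x := fun u x =>
    rot3 fun y v r => p u v r x y
  have idPURXr : ∀ u x, (∑ r, PURX u r x) = PUX u x := fun u x => Finset.sum_comm
  have idquv : ∀ u v, quv u v = ∑ x, ∑ y, q4 u v x y := fun u v =>
    rot3 fun r x y => p u v r x y
  have idq4 : ∀ u v x y, q4 u v x y = quv u v * qxy x y := hIUVXY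
  have idq3f : ∀ u x y, q3 u x y = qu u * qxy x y := by
    intro u x y
    have h1 : q3 u x y = ∑ v, q4 u v x y := rfl
    rw [h1]
    simp only [idq4]
    rw [← Finset.sum_mul]
  -- totals
  have hsum_quv : ∑ u, ∑ v, quv u v = 1 := hsum
  have hsum_qu : ∑ u, qu u = 1 := hsum
  have hsum_qxy : ∑ x, ∑ y, qxy x y = 1 := by
    obtain ⟨u, hu⟩ : ∃ u, qu u ≠ 0 := by
      by_contra hc
      push_neg at hc
      rw [Finset.sum_eq_zero fun u _ => hc u] at hsum_qu
      exact one_ne_zero hsum_qu.symm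
    obtain ⟨v, hv⟩ : ∃ v, quv u v ≠ 0 := by
      by_contra hc
      push_neg at hc
      exact hu (Finset.sum_eq_zero fun v _ => hc v)
    have h1 : quv u v * 1 = quv u v * (∑ x, ∑ y, qxy x y) := by
      rw [mul_one]
      calc quv u v = ∑ x, ∑ y, q4 u v x y := idquv u v
        _ = ∑ x, ∑ y, quv u v * qxy x y := by simp only [idq4]
        _ = quv u v * ∑ x, ∑ y, qxy x y := by
            simp only [← Finset.mul_sum]
    exact (mul_left_cancel₀ hv h1).symm
  -- Step C : H(V|U) = H(V|UXY), i.e. E_quv - E_qu = E_q4 - E_q3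
  have hEq4 : ∑ u, ∑ v, ∑ x, ∑ y, Real.negMulLog (q4 u v x y)
      = (∑ u, ∑ v, Real.negMulLog (quv u v)) + (∑ x, ∑ y, Real.negMulLog (qxy x y)) := by
    simp only [idq4]
    rw [entmul22 quv qxy, hsum_quv, hsum_qxy]
    ring
  have hEq3 : ∑ u, ∑ x, ∑ y, Real.negMulLog (q3 u x y)
      = (∑ u, Real.negMulLog (qu u)) + (∑ x, ∑ y, Real.negMulLog (qxy x y)) := by
    simp only [idq3f]
    rw [entmul12 qu qxy, hsum_qu, hsum_qxy]
    ring
  -- Step B : E_q4 ≤ E_P4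
  have hB : ∑ u, ∑ v, ∑ x, ∑ y, Real.negMulLog (q4 u v x y)
      ≤ ∑ u, ∑ r, ∑ x, ∑ y, Real.negMulLog (P4 u r x y) := by
    have key : ∀ u x y, (∑ v, Real.negMulLog (q4 u v x y))
        ≤ ∑ r, Real.negMulLog (P4 u r x y) := by
      intro u x y
      have hfib : ∀ v, q4 u v x y
          = ∑ r ∈ Finset.univ.filter (fun r => hV r x y = v), P4 u r x y := by
        intro v
        have h1 : ∀ r ∈ Finset.univ.filter (fun r => hV r x y = v),
            P4 u r x y = p u v r x y := by
          intro r hr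
          rw [Finset.mem_filter] at hr
          refine Finset.sum_eq_single v (fun v' _ hne => ?_)
            (fun habs => absurd (Finset.mem_univ v) habs)
          by_contra hpz
          exact hne ((hhV u v' r x y hpz).trans hr.2)
        rw [Finset.sum_congr rfl h1, Finset.sum_filter]
        refine Finset.sum_congr rfl fun r _ => ?_
        by_cases hc : hV r x y = v
        · simp [hc]
        · simp only [hc, if_false]
          by_contra hpz
          exact hc ((hhV u v r x y hpz).symm)
      calc (∑ v, Real.negMulLog (q4 u v x y))
          ≤ ∑ v, ∑ r ∈ Finset.univ.filter (fun r => hV r x y = v),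
              Real.negMulLog (P4 u r x y) := by
            refine Finset.sum_le_sum fun v _ => ?_
            rw [hfib v]
            exact subadd_negMulLog _ _ fun r _ => hP4nn u r x y
        _ = ∑ r, Real.negMulLog (P4 u r x y) :=
            Finset.sum_fiberwise _ _ _
    have e1 : ∀ u, (∑ v, ∑ x, ∑ y, Real.negMulLog (q4 u v x y))
        = ∑ x, ∑ y, ∑ v, Real.negMulLog (q4 u v x y) := fun u =>
      rot3 fun v x y => Real.negMulLog (q4 u v x y)
    have e2 : ∀ u, (∑ r, ∑ x, ∑ y, Real.negMulLog (P4 u r x y))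
        = ∑ x, ∑ y, ∑ r, Real.negMulLog (P4 u r x y) := fun u =>
      rot3 fun r x y => Real.negMulLog (P4 u r x y)
    simp only [e1, e2]
    refine Finset.sum_le_sum fun u _ => Finset.sum_le_sum fun x _ =>
      Finset.sum_le_sum fun y _ => key u x y
  -- Step A : E_P4 - E_q3 ≤ E_PURX - E_PUX  (conditioning reduces entropy)
  have hA : (∑ u, ∑ r, ∑ x, ∑ y, Real.negMulLog (P4 u r x y))
        - (∑ u, ∑ x, ∑ y, Real.negMulLog (q3 u x y))
      ≤ (∑ u, ∑ r, ∑ x, Real.negMulLog (PURX u r x))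
        - (∑ u, ∑ x, Real.negMulLog (PUX u x)) := by
    set g : 𝒰 → ℛ → 𝒳 → 𝒴 → ℝ :=
      fun u r x y => q3 u x y * PURX u r x / PUX u x with hgdef
    have hgnn : ∀ u r x y, 0 ≤ g u r x y := fun u r x y => by
      have := hq3nn u x y; have := hPURXnn u r x; have := hPUXnn u x
      positivity
    -- pointwise bound
    have hpt : ∀ u r x y, P4 u r x y - g u r x y
        ≤ -(P4 u r x y * Real.log (q3 u x y)) + -(P4 u r x y * Real.log (PURX u r x))
          + P4 u r x y * Real.log (PUX u x) + P4 u r x y * Real.log (P4 u r x y) := by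
      intro u r x y
      rcases eq_or_lt_of_le (hP4nn u r x y) with h0 | h0
      · rw [← h0]
        simp [hgnn u r x y]
      · have hq3pos : 0 < q3 u x y := lt_of_lt_of_le h0 (by
          rw [idq3 u x y]
          exact Finset.single_le_sum (fun r _ => hP4nn u r x y) (Finset.mem_univ r))
        have hPURXpos : 0 < PURX u r x := lt_of_lt_of_le h0 (by
          rw [idPURX u r x]
          exact Finset.single_le_sum (fun y _ => hP4nn u r x y) (Finset.mem_univ y))
        have hPUXpos : 0 < PUX u x := lt_of_lt_of_le h0 (by
          rw [idPUX u x]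
          calc P4 u r x y ≤ ∑ y, P4 u r x y :=
              Finset.single_le_sum (fun y _ => hP4nn u r x y) (Finset.mem_univ y)
            _ ≤ ∑ r, ∑ y, P4 u r x y :=
              Finset.single_le_sum
                (fun r _ => Finset.sum_nonneg fun y _ => hP4nn u r x y)
                (Finset.mem_univ r))
        have hgpos : 0 < g u r x y := by
          have : g u r x y = q3 u x y * PURX u r x / PUX u x := rfl
          rw [this]; positivity
        have hkl := kl_pt (hP4nn u r x y) (hgnn u r x y) fun _ => hgpos.ne'
        have hlogg : Real.log (g u r x y)
            = Real.log (q3 u x y) + Real.log (PURX u r x) - Real.log (PUX u x) := by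
          have : g u r x y = q3 u x y * PURX u r x / PUX u x := rfl
          rw [this, Real.log_div (by positivity) hPUXpos.ne',
            Real.log_mul hq3pos.ne' hPURXpos.ne']
        rw [hlogg] at hkl
        nlinarith [hkl]
    -- sums of g
    have hgsum : ∀ u x, (∑ r, ∑ y, g u r x y) = PUX u x := by
      intro u x
      by_cases h0 : PUX u x = 0
      · have hq30 : ∀ y, q3 u x y = 0 := by
          have hz : ∑ y, q3 u x y = 0 := by rw [idq3y u x, h0]
          intro y
          exact (Finset.sum_eq_zero_iff_of_nonneg fun y _ => hq3nn u x y).mp hz y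
            (Finset.mem_univ y)
        have : ∀ r y, g u r x y = 0 := by
          intro r y
          show q3 u x y * PURX u r x / PUX u x = 0
          rw [hq30 y, zero_mul, zero_div]
        simp only [this, Finset.sum_const_zero]
        exact h0.symm
      · have step : ∀ r, (∑ y, g u r x y) = PURX u r x := by
          intro r
          have : (∑ y, g u r x y) = (∑ y, q3 u x y) * (PURX u r x / PUX u x) := by
            rw [Finset.sum_mul]
            exact Finset.sum_congr rfl fun y _ => mul_div_assoc _ _ _
          rw [this, idq3y u x, mul_div_assoc']
          rw [mul_comm, mul_div_assoc, div_self h0, mul_one]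
        simp only [step]
        exact idPURXr u x
    have hP4sum : ∀ u x, (∑ r, ∑ y, P4 u r x y) = PUX u x := fun u x => (idPUX u x).symm
    -- rewrite the entropies as 4-fold sums
    have Eq3' : (∑ u, ∑ x, ∑ y, Real.negMulLog (q3 u x y))
        = ∑ u, ∑ r, ∑ x, ∑ y, -(P4 u r x y * Real.log (q3 u x y)) := by
      have h1 : ∀ u x y, Real.negMulLog (q3 u x y)
          = ∑ r, -(P4 u r x y * Real.log (q3 u x y)) := by
        intro u x y
        rw [Real.negMulLog, idq3]
        rw [neg_mul, Finset.sum_mul, ← Finset.sum_neg_distrib]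
      simp only [h1]
      exact Finset.sum_congr rfl fun u _ =>
        (rot3 fun x y r => -(P4 u r x y * Real.log (q3 u x y))).trans
          (rot3 fun y r x => -(P4 u r x y * Real.log (q3 u x y)))
    have EPURX' : (∑ u, ∑ r, ∑ x, Real.negMulLog (PURX u r x))
        = ∑ u, ∑ r, ∑ x, ∑ y, -(P4 u r x y * Real.log (PURX u r x)) := by
      refine Finset.sum_congr rfl fun u _ => Finset.sum_congr rfl fun r _ =>
        Finset.sum_congr rfl fun x _ => ?_
      rw [Real.negMulLog, idPURX]
      rw [neg_mul, Finset.sum_mul, ← Finset.sum_neg_distrib]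
    have EPUX' : (∑ u, ∑ x, Real.negMulLog (PUX u x))
        = ∑ u, ∑ r, ∑ x, ∑ y, -(P4 u r x y * Real.log (PUX u x)) := by
      have h1 : ∀ u x, Real.negMulLog (PUX u x)
          = ∑ r, ∑ y, -(P4 u r x y * Real.log (PUX u x)) := by
        intro u x
        rw [Real.negMulLog, idPUX]
        rw [neg_mul, Finset.sum_mul, ← Finset.sum_neg_distrib]
        refine Finset.sum_congr rfl fun r _ => ?_
        rw [Finset.sum_mul, ← Finset.sum_neg_distrib]
      simp only [h1]
      exact Finset.sum_congr rfl fun u _ => Finset.sum_comm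
    have EP4' : (∑ u, ∑ r, ∑ x, ∑ y, Real.negMulLog (P4 u r x y))
        = ∑ u, ∑ r, ∑ x, ∑ y, -(P4 u r x y * Real.log (P4 u r x y)) := by
      refine Finset.sum_congr rfl fun u _ => Finset.sum_congr rfl fun r _ =>
        Finset.sum_congr rfl fun x _ => Finset.sum_congr rfl fun y _ => ?_
      rw [Real.negMulLog, neg_mul]
    -- main summed inequality
    have hmain : (0 : ℝ)
        ≤ ∑ u, ∑ r, ∑ x, ∑ y,
            (-(P4 u r x y * Real.log (q3 u x y))
              + -(P4 u r x y * Real.log (PURX u r x))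
              + P4 u r x y * Real.log (PUX u x)
              + P4 u r x y * Real.log (P4 u r x y)
              - (P4 u r x y - g u r x y)) := by
      refine Finset.sum_nonneg fun u _ => Finset.sum_nonneg fun r _ =>
        Finset.sum_nonneg fun x _ => Finset.sum_nonneg fun y _ => ?_
      have := hpt u r x y
      linarith
    have hzero : (∑ u, ∑ r, ∑ x, ∑ y, (P4 u r x y - g u r x y)) = 0 := by
      have h1 : ∀ u x, (∑ r, ∑ y, (P4 u r x y - g u r x y)) = 0 := by
        intro u x
        simp only [Finset.sum_sub_distrib]
        rw [hP4sum u x, hgsum u x, sub_self]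
      have h2 : ∀ u, (∑ r, ∑ x, ∑ y, (P4 u r x y - g u r x y)) = 0 := by
        intro u
        rw [Finset.sum_comm]
        exact Finset.sum_eq_zero fun x _ => h1 u x
      exact Finset.sum_eq_zero fun u _ => h2 u
    rw [Eq3', EPURX', EPUX', EP4']
    simp only [Finset.sum_sub_distrib, Finset.sum_add_distrib, Finset.sum_neg_distrib] at hmain hzero ⊢
    linarith
  linarith [hEq4, hEq3, hB, hA]
end

section
/- Suppose I(Uⁿ;Xⁿ)=0, I(Vᵐ;Yᵐ)=0, I(Vᵐ; Sᵐ,Uⁿ,Xⁿ)=0, I(Uⁿ,Xⁿ; Yᵐ | Vᵐ,Sᵐ)=0, and I(Sᵐ; Uⁿ,Xⁿ)=0. Then I(Xⁿ,Yᵐ ; Uⁿ,Vᵐ)=0, i.e., the joint system remains perfectly secure. -/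
/-- If `I(Uⁿ;Xⁿ)=0`, `I(Vᵐ;Yᵐ)=0`, `I(Vᵐ;Sᵐ,Uⁿ,Xⁿ)=0`,
`I(Uⁿ,Xⁿ;Yᵐ|Vᵐ,Sᵐ)=0` and `I(Sᵐ;Uⁿ,Xⁿ)=0`, then the joint system remains
perfectly secure: `I(Xⁿ,Yᵐ;Uⁿ,Vᵐ)=0`.  All (conditional) independences are
expressed by factorization of the joint mass function `p` of
`(Uⁿ, Xⁿ, Vᵐ, Sᵐ, Yᵐ)`. -/
theorem stmt_8 {U X V S Y : Type*}
    [Fintype U] [Fintype X] [Fintype V] [Fintype S] [Fintype Y]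
    (p : U → X → V → S → Y → ℝ)
    (hnn : ∀ u x v s y, 0 ≤ p u x v s y)
    (hsum : ∑ u, ∑ x, ∑ v, ∑ s, ∑ y, p u x v s y = 1)
    -- `I(Uⁿ;Xⁿ) = 0`
    (hUX : ∀ u x, (∑ v, ∑ s, ∑ y, p u x v s y)
      = (∑ x', ∑ v, ∑ s, ∑ y, p u x' v s y) * (∑ u', ∑ v, ∑ s, ∑ y, p u' x v s y))
    -- `I(Vᵐ;Yᵐ) = 0`
    (hVY : ∀ v y, (∑ u, ∑ x, ∑ s, p u x v s y)
      = (∑ u, ∑ x, ∑ s, ∑ y', p u x v s y') * (∑ u, ∑ x, ∑ v', ∑ s, p u x v' s y))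
    -- `I(Vᵐ; Sᵐ,Uⁿ,Xⁿ) = 0`
    (hVSUX : ∀ v s u x, (∑ y, p u x v s y)
      = (∑ u', ∑ x', ∑ s', ∑ y, p u' x' v s' y) * (∑ v', ∑ y, p u x v' s y))
    -- `I(Uⁿ,Xⁿ; Yᵐ | Vᵐ,Sᵐ) = 0`
    (hcond : ∀ u x v s y,
      p u x v s y * (∑ u', ∑ x', ∑ y', p u' x' v s y')
        = (∑ y', p u x v s y') * (∑ u', ∑ x', p u' x' v s y))
    -- `I(Sᵐ; Uⁿ,Xⁿ) = 0`
    (hSUX : ∀ s u x, (∑ v, ∑ y, p u x v s y)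
      = (∑ u', ∑ x', ∑ v, ∑ y, p u' x' v s y) * (∑ v, ∑ s', ∑ y, p u x v s' y)) :
    -- `I(Xⁿ,Yᵐ; Uⁿ,Vᵐ) = 0`
    ∀ x y u v, (∑ s, p u x v s y)
      = (∑ u', ∑ v', ∑ s, p u' x v' s y) * (∑ x', ∑ s, ∑ y', p u x' v s y') := by
  classical
  -- total-sum-one facts for reordered sums
  have tX : (∑ x, ∑ u, ∑ v, ∑ s, ∑ y, p u x v s y) = 1 :=
    Finset.sum_comm.trans hsum
  have tV : (∑ v, ∑ u, ∑ x, ∑ s, ∑ y, p u x v s y) = 1 := by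
    calc (∑ v, ∑ u, ∑ x, ∑ s, ∑ y, p u x v s y)
        = ∑ u, ∑ v, ∑ x, ∑ s, ∑ y, p u x v s y := Finset.sum_comm
      _ = ∑ u, ∑ x, ∑ v, ∑ s, ∑ y, p u x v s y :=
          Finset.sum_congr rfl fun u _ => Finset.sum_comm
      _ = 1 := hsum
  have tS : (∑ s, ∑ u, ∑ x, ∑ v, ∑ y, p u x v s y) = 1 := by
    calc (∑ s, ∑ u, ∑ x, ∑ v, ∑ y, p u x v s y)
        = ∑ u, ∑ s, ∑ x, ∑ v, ∑ y, p u x v s y := Finset.sum_comm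
      _ = ∑ u, ∑ x, ∑ s, ∑ v, ∑ y, p u x v s y :=
          Finset.sum_congr rfl fun u _ => Finset.sum_comm
      _ = ∑ u, ∑ x, ∑ v, ∑ s, ∑ y, p u x v s y :=
          Finset.sum_congr rfl fun u _ => Finset.sum_congr rfl fun x _ => Finset.sum_comm
      _ = 1 := hsum
  -- fourfold factorization of the (U,X,V,S)-marginal
  have hA : ∀ u x v s, (∑ y, p u x v s y)
      = (∑ u', ∑ x', ∑ s', ∑ y, p u' x' v s' y)
        * ((∑ u', ∑ x', ∑ v', ∑ y, p u' x' v' s y)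
          * ((∑ x', ∑ v', ∑ s', ∑ y, p u x' v' s' y)
            * (∑ u', ∑ v', ∑ s', ∑ y, p u' x v' s' y))) := by
    intro u x v s
    rw [hVSUX v s u x, hSUX s u x, hUX u x]
  -- (V,S)-marginal factorizes
  have hVSfac : ∀ v s, (∑ u, ∑ x, ∑ y', p u x v s y')
      = (∑ u', ∑ x', ∑ s', ∑ y, p u' x' v s' y)
        * (∑ u', ∑ x', ∑ v', ∑ y, p u' x' v' s y) := by
    intro v s
    calc (∑ u, ∑ x, ∑ y', p u x v s y')
        = ∑ u, ∑ x, ((∑ u', ∑ x', ∑ s', ∑ y, p u' x' v s' y)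
            * (∑ u', ∑ x', ∑ v', ∑ y, p u' x' v' s y)
            * (∑ x', ∑ v', ∑ s', ∑ y, p u x' v' s' y)
            * (∑ u', ∑ v', ∑ s', ∑ y, p u' x v' s' y)) :=
          Finset.sum_congr rfl fun u _ => Finset.sum_congr rfl fun x _ => by
            rw [hA u x v s]; ring
      _ = ∑ u, ((∑ u', ∑ x', ∑ s', ∑ y, p u' x' v s' y)
            * (∑ u', ∑ x', ∑ v', ∑ y, p u' x' v' s y)
            * (∑ x', ∑ v', ∑ s', ∑ y, p u x' v' s' y)
            * ∑ x, (∑ u', ∑ v', ∑ s', ∑ y, p u' x v' s' y)) :=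
          Finset.sum_congr rfl fun u _ => by rw [← Finset.mul_sum]
      _ = (∑ u', ∑ x', ∑ s', ∑ y, p u' x' v s' y)
            * (∑ u', ∑ x', ∑ v', ∑ y, p u' x' v' s y)
            * (∑ u, ∑ x', ∑ v', ∑ s', ∑ y, p u x' v' s' y)
            * (∑ x, ∑ u', ∑ v', ∑ s', ∑ y, p u' x v' s' y) := by
          simp only [← Finset.mul_sum, ← Finset.sum_mul]
      _ = (∑ u', ∑ x', ∑ s', ∑ y, p u' x' v s' y)
            * (∑ u', ∑ x', ∑ v', ∑ y, p u' x' v' s y) := by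
          rw [hsum, tX]; ring
  -- key pointwise factorization: p = pU * pX * r
  have hkey : ∀ u x v s y, p u x v s y
      = (∑ x', ∑ v', ∑ s', ∑ y', p u x' v' s' y')
        * ((∑ u', ∑ v', ∑ s', ∑ y', p u' x v' s' y')
          * (∑ u', ∑ x', p u' x' v s y)) := by
    intro u x v s y
    by_cases hvz : (∑ u', ∑ x', ∑ s', ∑ y, p u' x' v s' y)
        * (∑ u', ∑ x', ∑ v', ∑ y, p u' x' v' s y) = 0
    · have hz : ∀ a b c, p a b v s c = 0 := by
        intro a b c
        have h0 : (∑ y, p a b v s y) = 0 := by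
          rcases mul_eq_zero.mp hvz with h | h <;> rw [hA a b v s, h] <;> ring
        have := (Finset.sum_eq_zero_iff_of_nonneg fun i _ => hnn a b v s i).mp h0
        exact this c (Finset.mem_univ c)
      simp [hz]
    · have h := hcond u x v s y
      rw [hVSfac v s] at h
      rw [hA u x v s] at h
      have h2 : (p u x v s y
          - (∑ x', ∑ v', ∑ s', ∑ y', p u x' v' s' y')
            * ((∑ u', ∑ v', ∑ s', ∑ y', p u' x v' s' y')
              * (∑ u', ∑ x', p u' x' v s y)))
          * ((∑ u', ∑ x', ∑ s', ∑ y, p u' x' v s' y)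
            * (∑ u', ∑ x', ∑ v', ∑ y, p u' x' v' s y)) = 0 := by
        linear_combination h
      rcases mul_eq_zero.mp h2 with h3 | h3
      · exact sub_eq_zero.mp h3
      · exact absurd h3 hvz
  -- reordering of the (V,S,Y)-marginal sums
  have hrv : ∀ v y, (∑ s, ∑ u, ∑ x, p u x v s y) = ∑ u, ∑ x, ∑ s, p u x v s y := by
    intro v y
    calc (∑ s, ∑ u, ∑ x, p u x v s y)
        = ∑ u, ∑ s, ∑ x, p u x v s y := Finset.sum_comm
      _ = ∑ u, ∑ x, ∑ s, p u x v s y :=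
          Finset.sum_congr rfl fun u _ => Finset.sum_comm
  intro x y u v
  -- left-hand side
  have hL : (∑ s, p u x v s y)
      = (∑ x', ∑ v', ∑ s', ∑ y', p u x' v' s' y')
        * ((∑ u', ∑ v', ∑ s', ∑ y', p u' x v' s' y')
          * ((∑ u', ∑ x', ∑ s', ∑ y', p u' x' v s' y')
            * (∑ u', ∑ x', ∑ v', ∑ s', p u' x' v' s' y))) := by
    calc (∑ s, p u x v s y)
        = ∑ s, ((∑ x', ∑ v', ∑ s', ∑ y', p u x' v' s' y')
            * ((∑ u', ∑ v', ∑ s', ∑ y', p u' x v' s' y')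
              * (∑ u', ∑ x', p u' x' v s y))) :=
          Finset.sum_congr rfl fun s _ => hkey u x v s y
      _ = (∑ x', ∑ v', ∑ s', ∑ y', p u x' v' s' y')
            * ((∑ u', ∑ v', ∑ s', ∑ y', p u' x v' s' y')
              * (∑ s, ∑ u', ∑ x', p u' x' v s y)) := by
          simp only [← Finset.mul_sum]
      _ = _ := by rw [hrv v y, hVY v y]
  -- first factor of the right-hand side
  have hR1 : (∑ u', ∑ v', ∑ s, p u' x v' s y)
      = (∑ u'', ∑ v', ∑ s', ∑ y', p u'' x v' s' y')
        * (∑ u', ∑ x', ∑ v', ∑ s, p u' x' v' s y) := by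
    calc (∑ u', ∑ v', ∑ s, p u' x v' s y)
        = ∑ u', ∑ v', ∑ s, ((∑ x', ∑ v'', ∑ s', ∑ y', p u' x' v'' s' y')
            * ((∑ u'', ∑ v'', ∑ s', ∑ y', p u'' x v'' s' y')
              * (∑ u'', ∑ x', p u'' x' v' s y))) :=
          Finset.sum_congr rfl fun u' _ => Finset.sum_congr rfl fun v' _ =>
            Finset.sum_congr rfl fun s _ => hkey u' x v' s y
      _ = ∑ u', ((∑ x', ∑ v'', ∑ s', ∑ y', p u' x' v'' s' y')
            * ((∑ u'', ∑ v'', ∑ s', ∑ y', p u'' x v'' s' y')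
              * (∑ v', ∑ s, ∑ u'', ∑ x', p u'' x' v' s y))) :=
          Finset.sum_congr rfl fun u' _ => by simp only [← Finset.mul_sum]
      _ = (∑ u', ∑ x', ∑ v'', ∑ s', ∑ y', p u' x' v'' s' y')
            * ((∑ u'', ∑ v'', ∑ s', ∑ y', p u'' x v'' s' y')
              * (∑ v', ∑ s, ∑ u'', ∑ x', p u'' x' v' s y)) := by
          rw [← Finset.sum_mul]
      _ = (∑ u'', ∑ v'', ∑ s', ∑ y', p u'' x v'' s' y')
            * (∑ v', ∑ s, ∑ u'', ∑ x', p u'' x' v' s y) := by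
          rw [hsum]; ring
      _ = (∑ u'', ∑ v', ∑ s', ∑ y', p u'' x v' s' y')
            * ∑ v', ((∑ u, ∑ x', ∑ s, ∑ y', p u x' v' s y')
              * (∑ u, ∑ x', ∑ v'', ∑ s, p u x' v'' s y)) := by
          rw [Finset.sum_congr rfl fun v' (_ : v' ∈ Finset.univ) =>
            (hrv v' y).trans (hVY v' y)]
      _ = _ := by
          rw [show (∑ v', ((∑ u, ∑ x', ∑ s, ∑ y', p u x' v' s y')
              * (∑ u, ∑ x', ∑ v'', ∑ s, p u x' v'' s y)))
            = (∑ v', ∑ u, ∑ x', ∑ s, ∑ y', p u x' v' s y')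
              * (∑ u, ∑ x', ∑ v'', ∑ s, p u x' v'' s y) from by
                rw [← Finset.sum_mul], tV]
          ring
  -- second factor of the right-hand side
  have hR2 : (∑ x', ∑ s, ∑ y', p u x' v s y')
      = (∑ u', ∑ x', ∑ s', ∑ y', p u' x' v s' y')
        * (∑ x', ∑ v', ∑ s', ∑ y', p u x' v' s' y') := by
    calc (∑ x', ∑ s, ∑ y', p u x' v s y')
        = ∑ x', ∑ s, ((∑ u', ∑ x'', ∑ s', ∑ y, p u' x'' v s' y)
            * ((∑ u', ∑ x'', ∑ v', ∑ y, p u' x'' v' s y)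
              * ((∑ x'', ∑ v', ∑ s', ∑ y, p u x'' v' s' y)
                * (∑ u', ∑ v', ∑ s', ∑ y, p u' x' v' s' y)))) :=
          Finset.sum_congr rfl fun x' _ => Finset.sum_congr rfl fun s _ => hA u x' v s
      _ = ∑ x', ((∑ u', ∑ x'', ∑ s', ∑ y, p u' x'' v s' y)
            * ((∑ s, ∑ u', ∑ x'', ∑ v', ∑ y, p u' x'' v' s y)
              * ((∑ x'', ∑ v', ∑ s', ∑ y, p u x'' v' s' y)
                * (∑ u', ∑ v', ∑ s', ∑ y, p u' x' v' s' y)))) := by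
          refine Finset.sum_congr rfl fun x' _ => ?_
          rw [show (∑ s, ((∑ u', ∑ x'', ∑ s', ∑ y, p u' x'' v s' y)
              * ((∑ u', ∑ x'', ∑ v', ∑ y, p u' x'' v' s y)
                * ((∑ x'', ∑ v', ∑ s', ∑ y, p u x'' v' s' y)
                  * (∑ u', ∑ v', ∑ s', ∑ y, p u' x' v' s' y)))))
            = ∑ s, ((∑ u', ∑ x'', ∑ v', ∑ y, p u' x'' v' s y)
              * ((∑ u', ∑ x'', ∑ s', ∑ y, p u' x'' v s' y)
                * ((∑ x'', ∑ v', ∑ s', ∑ y, p u x'' v' s' y)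
                  * (∑ u', ∑ v', ∑ s', ∑ y, p u' x' v' s' y)))) from
            Finset.sum_congr rfl fun s _ => by ring]
          rw [← Finset.sum_mul]
          ring
      _ = (∑ u', ∑ x'', ∑ s', ∑ y, p u' x'' v s' y)
            * ((∑ s, ∑ u', ∑ x'', ∑ v', ∑ y, p u' x'' v' s y)
              * ((∑ x'', ∑ v', ∑ s', ∑ y, p u x'' v' s' y)
                * (∑ x', ∑ u', ∑ v', ∑ s', ∑ y, p u' x' v' s' y))) := by
          simp only [← Finset.mul_sum]
      _ = _ := by rw [tS, tX]; ring
  rw [hR1, hR2, hL]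
  ring
end

section
/- Suppose H(Sᵐ | Rⁿ,Uⁿ,Xⁿ,A)=0 and I(Sᵐ; Uⁿ,Xⁿ)=0, and the triples (Uᵢ,Rᵢ,Xᵢ) for i=1,…,n are i.i.d. Then H(Sᵐ) − H(A | Rⁿ,Uⁿ,Xⁿ) ≤ n·H(R|U,X), where (U,R,X) is the generic distribution. -/
open Finset Real

/-! Auxiliary lemmas -/

/-- Concavity-style bound: `negMulLog` of a sum of nonnegatives is at most the
sum of `negMulLog`s. -/
lemma aux_negMulLog_sum_le {β : Type*} [Fintype β] (f : β → ℝ) (h : ∀ b, 0 ≤ f b) :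
    Real.negMulLog (∑ b, f b) ≤ ∑ b, Real.negMulLog (f b) := by
  have hS : ∀ b, f b ≤ ∑ b', f b' := fun b =>
    Finset.single_le_sum (fun i _ => h i) (Finset.mem_univ b)
  have h1 : Real.negMulLog (∑ b, f b)
      = ∑ b, -(f b * Real.log (∑ b', f b')) := by
    rw [Real.negMulLog, neg_mul, Finset.sum_mul, ← Finset.sum_neg_distrib]
  rw [h1]
  apply Finset.sum_le_sum
  intro b _
  rcases (h b).eq_or_lt with h0 | h0
  · simp [← h0]
  · have hl : Real.log (f b) ≤ Real.log (∑ b', f b') := Real.log_le_log h0 (hS b)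
    have := mul_le_mul_of_nonneg_left hl (h b)
    rw [Real.negMulLog, neg_mul]
    linarith

/-- If at most one value of `f` is nonzero, `negMulLog` commutes with the sum. -/
lemma aux_det {β : Type*} [Fintype β] (f : β → ℝ) (b0 : β)
    (h : ∀ b, f b ≠ 0 → b = b0) :
    ∑ b, Real.negMulLog (f b) = Real.negMulLog (∑ b, f b) := by
  have h1 : ∑ b, f b = f b0 :=
    Finset.sum_eq_single b0
      (fun b _ hb => by_contra fun hc => hb (h b hc))
      (fun h' => absurd (Finset.mem_univ b0) h')
  have h2 : ∑ b, Real.negMulLog (f b) = Real.negMulLog (f b0) :=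
    Finset.sum_eq_single b0
      (fun b _ hb => by
        have : f b = 0 := by_contra fun hc => hb (h b hc)
        simp [this])
      (fun h' => absurd (Finset.mem_univ b0) h')
  rw [h1, h2]

/-- Sum over all functions of a product equals product of sums. -/
lemma aux_sum_prod {α : Type*} [Fintype α] :
    ∀ (n : ℕ) (F : Fin n → α → ℝ),
      (∑ r : Fin n → α, ∏ i, F i (r i)) = ∏ i, ∑ a, F i a := by
  intro n
  induction n with
  | zero => intro F; simp
  | succ m ih =>
    intro F
    rw [← (Fin.consEquiv (fun _ : Fin (m + 1) => α)).sum_comp]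
    rw [Fintype.sum_prod_type]
    have key : ∀ (a : α) (f : Fin m → α),
        (∏ i, F i ((Fin.consEquiv (fun _ : Fin (m + 1) => α)) (a, f) i))
          = F 0 a * ∏ i, F i.succ (f i) := by
      intro a f
      rw [Fin.prod_univ_succ]
      simp [Fin.consEquiv]
    calc (∑ a : α, ∑ f : Fin m → α, ∏ i, F i ((Fin.consEquiv (fun _ : Fin (m + 1) => α)) (a, f) i))
        = ∑ a : α, ∑ f : Fin m → α, F 0 a * ∏ i, F i.succ (f i) := by
          refine Finset.sum_congr rfl fun a _ => Finset.sum_congr rfl fun f _ => key a f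
      _ = (∑ a : α, F 0 a) * ∑ f : Fin m → α, ∏ i, F i.succ (f i) := by
          rw [Finset.sum_mul]
          refine Finset.sum_congr rfl fun a _ => ?_
          rw [Finset.mul_sum]
      _ = (∑ a : α, F 0 a) * ∏ i : Fin m, ∑ a, F i.succ a := by rw [ih]
      _ = ∏ i : Fin (m + 1), ∑ a, F i a := by rw [Fin.prod_univ_succ]

/-- Entropy tensorizes over i.i.d. products. -/
lemma aux_ent_prod {α : Type*} [Fintype α] (Q : α → ℝ) (hsum : ∑ a, Q a = 1) :
    ∀ n : ℕ, (∑ f : Fin n → α, Real.negMulLog (∏ i, Q (f i)))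
      = n * ∑ a, Real.negMulLog (Q a) := by
  intro n
  induction n with
  | zero => simp
  | succ m ih =>
    have hone : (∑ f : Fin m → α, ∏ i, Q (f i)) = 1 := by
      rw [aux_sum_prod m (fun _ a => Q a)]
      simp [hsum]
    rw [← (Fin.consEquiv (fun _ : Fin (m + 1) => α)).sum_comp, Fintype.sum_prod_type]
    have key : ∀ (a : α) (f : Fin m → α),
        (∏ i, Q ((Fin.consEquiv (fun _ : Fin (m + 1) => α)) (a, f) i)) = Q a * ∏ i, Q (f i) := by
      intro a f
      rw [Fin.prod_univ_succ]
      simp [Fin.consEquiv]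
    calc (∑ a : α, ∑ f : Fin m → α, Real.negMulLog (∏ i, Q ((Fin.consEquiv (fun _ : Fin (m + 1) => α)) (a, f) i)))
        = ∑ a : α, ∑ f : Fin m → α,
            ((∏ i, Q (f i)) * Real.negMulLog (Q a) + Q a * Real.negMulLog (∏ i, Q (f i))) := by
          refine Finset.sum_congr rfl fun a _ => Finset.sum_congr rfl fun f _ => ?_
          rw [key a f, Real.negMulLog_mul]
      _ = ∑ a : α, (Real.negMulLog (Q a) * (∑ f : Fin m → α, ∏ i, Q (f i))
            + Q a * ∑ f : Fin m → α, Real.negMulLog (∏ i, Q (f i))) := by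
          refine Finset.sum_congr rfl fun a _ => ?_
          rw [Finset.sum_add_distrib, ← Finset.sum_mul, ← Finset.mul_sum,
            mul_comm (∑ f : Fin m → α, ∏ i, Q (f i))]
      _ = ∑ a : α, (Real.negMulLog (Q a) + Q a * (m * ∑ b, Real.negMulLog (Q b))) := by
          refine Finset.sum_congr rfl fun a _ => ?_
          rw [hone, ih, mul_one]
      _ = (m + 1 : ℕ) * ∑ a, Real.negMulLog (Q a) := by
          rw [Finset.sum_add_distrib, ← Finset.sum_mul, hsum]
          push_cast
          ring

/-- Pull the outermost of five sums to the innermost position. -/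
lemma aux_movein5 {A B C D E : Type*} [Fintype A] [Fintype B] [Fintype C] [Fintype D]
    [Fintype E] (h : A → B → C → D → E → ℝ) :
    ∑ s : E, ∑ r : A, ∑ u : B, ∑ x : C, ∑ a : D, h r u x a s
      = ∑ r, ∑ u, ∑ x, ∑ a, ∑ s, h r u x a s := by
  rw [Finset.sum_comm]
  refine Finset.sum_congr rfl fun r _ => ?_
  rw [Finset.sum_comm]
  refine Finset.sum_congr rfl fun u _ => ?_
  rw [Finset.sum_comm]
  refine Finset.sum_congr rfl fun x _ => ?_
  rw [Finset.sum_comm]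

/-- Reorder five sums. -/
lemma aux_reorder5 {A B C D E : Type*} [Fintype A] [Fintype B] [Fintype C] [Fintype D]
    [Fintype E] (h : A → B → C → D → E → ℝ) :
    ∑ s : E, ∑ u : B, ∑ x : C, ∑ r : A, ∑ a : D, h r u x a s
      = ∑ r, ∑ u, ∑ x, ∑ a, ∑ s, h r u x a s := by
  have step : ∀ s : E, ∑ u : B, ∑ x : C, ∑ r : A, ∑ a : D, h r u x a s
      = ∑ r : A, ∑ u : B, ∑ x : C, ∑ a : D, h r u x a s := by
    intro s
    rw [show (∑ u : B, ∑ x : C, ∑ r : A, ∑ a : D, h r u x a s)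
        = ∑ u : B, ∑ r : A, ∑ x : C, ∑ a : D, h r u x a s from
      Finset.sum_congr rfl fun u _ => Finset.sum_comm, Finset.sum_comm]
  rw [Finset.sum_congr rfl fun s _ => step s]
  exact aux_movein5 h

/-- Reorder three sums. -/
lemma aux_reorder3 {A B C : Type*} [Fintype A] [Fintype B] [Fintype C]
    (h : A → B → C → ℝ) :
    ∑ u : B, ∑ x : C, ∑ r : A, h r u x = ∑ r, ∑ u, ∑ x, h r u x := by
  rw [show (∑ u : B, ∑ x : C, ∑ r : A, h r u x)
      = ∑ u : B, ∑ r : A, ∑ x : C, h r u x from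
    Finset.sum_congr rfl fun u _ => Finset.sum_comm, Finset.sum_comm]

/-- Triple of functions = function into triple. -/
def aux_equiv3 {n : ℕ} (α β γ : Type*) :
    ((Fin n → α) × (Fin n → β) × (Fin n → γ)) ≃ (Fin n → α × β × γ) where
  toFun t := fun i => (t.1 i, t.2.1 i, t.2.2 i)
  invFun f := (fun i => (f i).1, fun i => (f i).2.1, fun i => (f i).2.2)
  left_inv t := rfl
  right_inv f := rfl

/-- Pair of functions = function into pair. -/
def aux_equiv2 {n : ℕ} (α β : Type*) :
    ((Fin n → α) × (Fin n → β)) ≃ (Fin n → α × β) where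
  toFun t := fun i => (t.1 i, t.2 i)
  invFun f := (fun i => (f i).1, fun i => (f i).2)
  left_inv t := rfl
  right_inv f := rfl

/-- If `H(Sᵐ|Rⁿ,Uⁿ,Xⁿ,A) = 0`, `I(Sᵐ;Uⁿ,Xⁿ) = 0` and `(Uᵢ,Rᵢ,Xᵢ)` are i.i.d.
with generic distribution `q`, then
`H(Sᵐ) − H(A|Rⁿ,Uⁿ,Xⁿ) ≤ n·H(R|U,X)`. -/
theorem stmt_9 {𝒰 ℛ 𝒳 𝒜 𝒮 : Type*}
    [Fintype 𝒰] [Fintype ℛ] [Fintype 𝒳] [Fintype 𝒜] [Fintype 𝒮]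
    (n : ℕ)
    (q : ℛ → 𝒰 → 𝒳 → ℝ)
    (hqnn : ∀ r u x, 0 ≤ q r u x)
    (hqsum : ∑ r, ∑ u, ∑ x, q r u x = 1)
    (p : (Fin n → ℛ) → (Fin n → 𝒰) → (Fin n → 𝒳) → 𝒜 → 𝒮 → ℝ)
    (hnn : ∀ r u x a s, 0 ≤ p r u x a s)
    (hsum : ∑ r, ∑ u, ∑ x, ∑ a, ∑ s, p r u x a s = 1)
    -- `(Uᵢ, Rᵢ, Xᵢ)` for `i = 1, …, n` are i.i.d. with generic distribution `q`
    (hiid : ∀ r u x, (∑ a, ∑ s, p r u x a s) = ∏ i, q (r i) (u i) (x i))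
    -- `H(Sᵐ | Rⁿ,Uⁿ,Xⁿ,A) = 0`
    (hdetS : ∃ g : (Fin n → ℛ) → (Fin n → 𝒰) → (Fin n → 𝒳) → 𝒜 → 𝒮,
      ∀ r u x a s, p r u x a s ≠ 0 → s = g r u x a)
    -- `I(Sᵐ; Uⁿ,Xⁿ) = 0`
    (hSUX : ∀ s u x, (∑ r, ∑ a, p r u x a s)
      = (∑ r, ∑ u', ∑ x', ∑ a, p r u' x' a s) * (∑ r, ∑ a, ∑ s', p r u x a s')) :
    -- `H(Sᵐ) − H(A | Rⁿ,Uⁿ,Xⁿ) ≤ n · H(R|U,X)`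
    ent (fun s : 𝒮 => ∑ r, ∑ u, ∑ x, ∑ a, p r u x a s)
        - (ent (fun t : (Fin n → ℛ) × (Fin n → 𝒰) × (Fin n → 𝒳) × 𝒜 =>
              ∑ s, p t.1 t.2.1 t.2.2.1 t.2.2.2 s)
          - ent (fun t : (Fin n → ℛ) × (Fin n → 𝒰) × (Fin n → 𝒳) =>
              ∑ a, ∑ s, p t.1 t.2.1 t.2.2 a s))
      ≤ n * (ent (fun t : ℛ × 𝒰 × 𝒳 => q t.1 t.2.1 t.2.2)
          - ent (fun t : 𝒰 × 𝒳 => ∑ r, q r t.1 t.2)) := by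
  obtain ⟨g, hg⟩ := hdetS
  -- normalizations of the generic distribution
  have hQsum : ∑ z : ℛ × 𝒰 × 𝒳, q z.1 z.2.1 z.2.2 = 1 := by
    simp only [Fintype.sum_prod_type]; exact hqsum
  have hQ'sum : ∑ w : 𝒰 × 𝒳, (∑ r, q r w.1 w.2) = 1 := by
    simp only [Fintype.sum_prod_type]
    rw [aux_reorder3 q]; exact hqsum
  -- total mass rearrangements
  have hpS1 : ∑ s, ∑ r, ∑ u, ∑ x, ∑ a, p r u x a s = 1 := by
    rw [aux_movein5 p]; exact hsum
  have hpUX1 : ∑ u, ∑ x, ∑ r, ∑ a, ∑ s, p r u x a s = 1 := by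
    rw [aux_reorder3 (fun r u x => ∑ a, ∑ s, p r u x a s)]; exact hsum
  -- H(Rⁿ,Uⁿ,Xⁿ) = n · H(R,U,X)
  have hER : (∑ r, ∑ u, ∑ x, Real.negMulLog (∑ a, ∑ s, p r u x a s))
      = n * ∑ z : ℛ × 𝒰 × 𝒳, Real.negMulLog (q z.1 z.2.1 z.2.2) := by
    have h1 : (∑ r, ∑ u, ∑ x, Real.negMulLog (∑ a, ∑ s, p r u x a s))
        = ∑ t : (Fin n → ℛ) × (Fin n → 𝒰) × (Fin n → 𝒳),
            Real.negMulLog (∏ i, q (t.1 i) (t.2.1 i) (t.2.2 i)) := by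
      simp only [Fintype.sum_prod_type]
      exact Finset.sum_congr rfl fun r _ => Finset.sum_congr rfl fun u _ =>
        Finset.sum_congr rfl fun x _ => by rw [hiid]
    rw [h1,
      Fintype.sum_equiv (aux_equiv3 ℛ 𝒰 𝒳)
        (fun t : (Fin n → ℛ) × (Fin n → 𝒰) × (Fin n → 𝒳) =>
          Real.negMulLog (∏ i, q (t.1 i) (t.2.1 i) (t.2.2 i)))
        (fun f : Fin n → ℛ × 𝒰 × 𝒳 =>
          Real.negMulLog (∏ i, q (f i).1 (f i).2.1 (f i).2.2))
        (fun t => rfl)]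
    exact aux_ent_prod (fun z : ℛ × 𝒰 × 𝒳 => q z.1 z.2.1 z.2.2) hQsum n
  -- H(Uⁿ,Xⁿ) = n · H(U,X)
  have hEUX : (∑ u, ∑ x, Real.negMulLog (∑ r, ∑ a, ∑ s, p r u x a s))
      = n * ∑ w : 𝒰 × 𝒳, Real.negMulLog (∑ r, q r w.1 w.2) := by
    have h1 : ∀ (u : Fin n → 𝒰) (x : Fin n → 𝒳),
        (∑ r, ∑ a, ∑ s, p r u x a s) = ∏ i, ∑ r', q r' (u i) (x i) := by
      intro u x
      calc (∑ r, ∑ a, ∑ s, p r u x a s)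
          = ∑ r : Fin n → ℛ, ∏ i, q (r i) (u i) (x i) :=
            Finset.sum_congr rfl fun r _ => hiid r u x
        _ = ∏ i, ∑ r', q r' (u i) (x i) := aux_sum_prod n (fun i a => q a (u i) (x i))
    calc (∑ u, ∑ x, Real.negMulLog (∑ r, ∑ a, ∑ s, p r u x a s))
        = ∑ t : (Fin n → 𝒰) × (Fin n → 𝒳),
            Real.negMulLog (∏ i, ∑ r', q r' (t.1 i) (t.2 i)) := by
          simp only [Fintype.sum_prod_type]
          exact Finset.sum_congr rfl fun u _ => Finset.sum_congr rfl fun x _ => by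
            rw [h1]
      _ = ∑ f : Fin n → 𝒰 × 𝒳, Real.negMulLog (∏ i, ∑ r', q r' (f i).1 (f i).2) :=
          Fintype.sum_equiv (aux_equiv2 𝒰 𝒳) _ _ (fun t => rfl)
      _ = n * ∑ w : 𝒰 × 𝒳, Real.negMulLog (∑ r, q r w.1 w.2) :=
          aux_ent_prod (fun w : 𝒰 × 𝒳 => ∑ r, q r w.1 w.2) hQ'sum n
  -- determinism of S given the rest
  have hEF : (∑ r, ∑ u, ∑ x, ∑ a, Real.negMulLog (∑ s, p r u x a s))
      = ∑ r, ∑ u, ∑ x, ∑ a, ∑ s, Real.negMulLog (p r u x a s) := by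
    refine Finset.sum_congr rfl fun r _ => Finset.sum_congr rfl fun u _ =>
      Finset.sum_congr rfl fun x _ => Finset.sum_congr rfl fun a _ => ?_
    exact (aux_det (fun s => p r u x a s) (g r u x a) (hg r u x a)).symm
  -- monotonicity: H(S,U,X) ≤ H(everything)
  have hmono : (∑ s, ∑ u, ∑ x, Real.negMulLog (∑ r, ∑ a, p r u x a s))
      ≤ ∑ s, ∑ u, ∑ x, ∑ r, ∑ a, Real.negMulLog (p r u x a s) := by
    refine Finset.sum_le_sum fun s _ => Finset.sum_le_sum fun u _ =>
      Finset.sum_le_sum fun x _ => ?_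
    have h := aux_negMulLog_sum_le (fun z : (Fin n → ℛ) × 𝒜 => p z.1 u x z.2 s)
      (fun z => hnn z.1 u x z.2 s)
    simpa only [Fintype.sum_prod_type] using h
  -- independence: H(S,U,X) = H(S) + H(U,X)
  have hfact : (∑ s, ∑ u, ∑ x, Real.negMulLog (∑ r, ∑ a, p r u x a s))
      = (∑ s, Real.negMulLog (∑ r, ∑ u, ∑ x, ∑ a, p r u x a s))
        + (∑ u, ∑ x, Real.negMulLog (∑ r, ∑ a, ∑ s, p r u x a s)) := by
    have step : ∀ s, (∑ u, ∑ x, Real.negMulLog (∑ r, ∑ a, p r u x a s))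
        = Real.negMulLog (∑ r, ∑ u, ∑ x, ∑ a, p r u x a s)
          + (∑ r, ∑ u, ∑ x, ∑ a, p r u x a s)
            * (∑ u, ∑ x, Real.negMulLog (∑ r, ∑ a, ∑ s', p r u x a s')) := by
      intro s
      calc (∑ u, ∑ x, Real.negMulLog (∑ r, ∑ a, p r u x a s))
          = ∑ u, ∑ x,
              ((∑ r, ∑ a, ∑ s', p r u x a s')
                  * Real.negMulLog (∑ r, ∑ u', ∑ x', ∑ a, p r u' x' a s)
                + (∑ r, ∑ u', ∑ x', ∑ a, p r u' x' a s)
                  * Real.negMulLog (∑ r, ∑ a, ∑ s', p r u x a s')) :=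
            Finset.sum_congr rfl fun u _ => Finset.sum_congr rfl fun x _ => by
              rw [hSUX s u x, Real.negMulLog_mul]
        _ = (∑ u, ∑ x, ∑ r, ∑ a, ∑ s', p r u x a s')
              * Real.negMulLog (∑ r, ∑ u', ∑ x', ∑ a, p r u' x' a s)
            + (∑ r, ∑ u', ∑ x', ∑ a, p r u' x' a s)
              * (∑ u, ∑ x, Real.negMulLog (∑ r, ∑ a, ∑ s', p r u x a s')) := by
            simp only [Finset.sum_add_distrib, ← Finset.sum_mul, ← Finset.mul_sum]
        _ = Real.negMulLog (∑ r, ∑ u, ∑ x, ∑ a, p r u x a s)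
              + (∑ r, ∑ u, ∑ x, ∑ a, p r u x a s)
                * (∑ u, ∑ x, Real.negMulLog (∑ r, ∑ a, ∑ s', p r u x a s')) := by
            rw [hpUX1, one_mul]
    calc (∑ s, ∑ u, ∑ x, Real.negMulLog (∑ r, ∑ a, p r u x a s))
        = ∑ s, (Real.negMulLog (∑ r, ∑ u, ∑ x, ∑ a, p r u x a s)
            + (∑ r, ∑ u, ∑ x, ∑ a, p r u x a s)
              * (∑ u, ∑ x, Real.negMulLog (∑ r, ∑ a, ∑ s', p r u x a s'))) :=
          Finset.sum_congr rfl fun s _ => step s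
      _ = (∑ s, Real.negMulLog (∑ r, ∑ u, ∑ x, ∑ a, p r u x a s))
            + (∑ s, ∑ r, ∑ u, ∑ x, ∑ a, p r u x a s)
              * (∑ u, ∑ x, Real.negMulLog (∑ r, ∑ a, ∑ s', p r u x a s')) := by
          rw [Finset.sum_add_distrib, ← Finset.sum_mul]
      _ = (∑ s, Real.negMulLog (∑ r, ∑ u, ∑ x, ∑ a, p r u x a s))
            + (∑ u, ∑ x, Real.negMulLog (∑ r, ∑ a, ∑ s, p r u x a s)) := by
          rw [hpS1, one_mul]
  -- chain the inequalities
  have hchain : (∑ s, Real.negMulLog (∑ r, ∑ u, ∑ x, ∑ a, p r u x a s))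
        + (∑ u, ∑ x, Real.negMulLog (∑ r, ∑ a, ∑ s, p r u x a s))
      ≤ ∑ r, ∑ u, ∑ x, ∑ a, Real.negMulLog (∑ s, p r u x a s) := by
    calc (∑ s, Real.negMulLog (∑ r, ∑ u, ∑ x, ∑ a, p r u x a s))
          + (∑ u, ∑ x, Real.negMulLog (∑ r, ∑ a, ∑ s, p r u x a s))
        = ∑ s, ∑ u, ∑ x, Real.negMulLog (∑ r, ∑ a, p r u x a s) := hfact.symm
      _ ≤ ∑ s, ∑ u, ∑ x, ∑ r, ∑ a, Real.negMulLog (p r u x a s) := hmono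
      _ = ∑ r, ∑ u, ∑ x, ∑ a, ∑ s, Real.negMulLog (p r u x a s) :=
          aux_reorder5 (fun r u x a s => Real.negMulLog (p r u x a s))
      _ = ∑ r, ∑ u, ∑ x, ∑ a, Real.negMulLog (∑ s, p r u x a s) := hEF.symm
  simp only [ent, Fintype.sum_prod_type]
  have hring : (n : ℝ) * ((∑ z : ℛ × 𝒰 × 𝒳, Real.negMulLog (q z.1 z.2.1 z.2.2))
        - ∑ w : 𝒰 × 𝒳, Real.negMulLog (∑ r, q r w.1 w.2))
      = n * (∑ z : ℛ × 𝒰 × 𝒳, Real.negMulLog (q z.1 z.2.1 z.2.2))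
        - n * ∑ w : 𝒰 × 𝒳, Real.negMulLog (∑ r, q r w.1 w.2) := by ring
  simp only [Fintype.sum_prod_type] at hring hER hEUX
  linarith [hchain, hER, hEUX]
end

section
/- In an error-free perfect secrecy system, the key entropy decomposes as H(R) = H(U) + I(X;R) + H(R|U,X). -/
/-- In an error-free perfect secrecy system, the key entropy decomposes as
`H(R) = H(U) + I(X;R) + H(R|U,X)`, where `I(X;R) = H(X) + H(R) − H(X,R)` and
`H(R|U,X) = H(U,R,X) − H(U,X)`. -/
theorem stmt_11 {𝒰 ℛ 𝒳 : Type*} [Fintype 𝒰] [Fintype ℛ] [Fintype 𝒳]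
    (p : 𝒰 → ℛ → 𝒳 → ℝ)
    (hnn : ∀ u r x, 0 ≤ p u r x)
    (hsum : ∑ u, ∑ r, ∑ x, p u r x = 1)
    (hIUX : ∀ u x, (∑ r, p u r x)
      = (∑ r, ∑ x', p u r x') * (∑ u', ∑ r, p u' r x))
    (hIUR : ∀ u r, (∑ x, p u r x)
      = (∑ r', ∑ x, p u r' x) * (∑ u', ∑ x, p u' r x))
    (hdet : ∃ g : ℛ → 𝒳 → 𝒰, ∀ u r x, p u r x ≠ 0 → u = g r x) :
    ent (fun r : ℛ => ∑ u, ∑ x, p u r x)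
      = ent (fun u : 𝒰 => ∑ r, ∑ x, p u r x)
        + (ent (fun x : 𝒳 => ∑ u, ∑ r, p u r x)
            + ent (fun r : ℛ => ∑ u, ∑ x, p u r x)
            - ent (fun t : 𝒳 × ℛ => ∑ u, p u t.2 t.1))
        + (ent (fun t : 𝒰 × ℛ × 𝒳 => p t.1 t.2.1 t.2.2)
            - ent (fun t : 𝒰 × 𝒳 => ∑ r, p t.1 r t.2)) := by
  obtain ⟨g, hg⟩ := hdet
  have hq1 : ∑ u, (∑ r, ∑ x, p u r x) = 1 := hsum
  have hs1 : ∑ x, (∑ u, ∑ r, p u r x) = 1 := by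
    rw [← hsum, Finset.sum_comm]
    exact Finset.sum_congr rfl fun u _ => Finset.sum_comm
  -- Step A: independence of U and X
  have hUX : ent (fun t : 𝒰 × 𝒳 => ∑ r, p t.1 r t.2)
      = ent (fun u : 𝒰 => ∑ r, ∑ x, p u r x) + ent (fun x : 𝒳 => ∑ u, ∑ r, p u r x) := by
    unfold ent
    rw [Fintype.sum_prod_type]
    have h : ∀ u x, Real.negMulLog (∑ r, p u r x)
        = (∑ u', ∑ r, p u' r x) * Real.negMulLog (∑ r, ∑ x', p u r x')
          + (∑ r, ∑ x', p u r x') * Real.negMulLog (∑ u', ∑ r, p u' r x) := by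
      intro u x
      rw [hIUX u x, Real.negMulLog_mul]
    simp only [h]
    rw [Finset.sum_congr rfl fun u _ => Finset.sum_add_distrib]
    rw [Finset.sum_add_distrib]
    congr 1
    · rw [Finset.sum_comm]
      calc ∑ x, ∑ u, (∑ u', ∑ r, p u' r x) * Real.negMulLog (∑ r, ∑ x', p u r x')
          = ∑ x, (∑ u', ∑ r, p u' r x) * (∑ u, Real.negMulLog (∑ r, ∑ x', p u r x')) := by
            exact Finset.sum_congr rfl fun x _ => (Finset.mul_sum _ _ _).symm
        _ = (∑ x, ∑ u', ∑ r, p u' r x) * (∑ u, Real.negMulLog (∑ r, ∑ x', p u r x')) := by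
            rw [Finset.sum_mul]
        _ = ∑ u, Real.negMulLog (∑ r, ∑ x', p u r x') := by rw [hs1, one_mul]
    · calc ∑ u, ∑ x, (∑ r, ∑ x', p u r x') * Real.negMulLog (∑ u', ∑ r, p u' r x)
          = ∑ u, (∑ r, ∑ x', p u r x') * (∑ x, Real.negMulLog (∑ u', ∑ r, p u' r x)) := by
            exact Finset.sum_congr rfl fun u _ => (Finset.mul_sum _ _ _).symm
        _ = (∑ u, ∑ r, ∑ x', p u r x') * (∑ x, Real.negMulLog (∑ u', ∑ r, p u' r x)) := by
            rw [Finset.sum_mul]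
        _ = ∑ x, Real.negMulLog (∑ u', ∑ r, p u' r x) := by rw [hq1, one_mul]
  -- Step B: determinism collapses H(U,R,X) to H(X,R)
  have key : ∀ r x, (∑ u, Real.negMulLog (p u r x)) = Real.negMulLog (∑ u, p u r x) := by
    intro r x
    by_cases h : ∀ u, p u r x = 0
    · simp [h]
    · push_neg at h
      obtain ⟨u0, hu0⟩ := h
      have hz : ∀ u, u ≠ g r x → p u r x = 0 := by
        intro u hne
        by_contra hc
        exact hne (hg u r x hc)
      rw [Finset.sum_eq_single (g r x) (fun b _ hb => by rw [hz b hb, Real.negMulLog_zero])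
        (fun hb => absurd (Finset.mem_univ _) hb),
        Finset.sum_eq_single (g r x) (fun b _ hb => hz b hb)
        (fun hb => absurd (Finset.mem_univ _) hb)]
  have hURX : ent (fun t : 𝒰 × ℛ × 𝒳 => p t.1 t.2.1 t.2.2)
      = ent (fun t : 𝒳 × ℛ => ∑ u, p u t.2 t.1) := by
    unfold ent
    simp only [Fintype.sum_prod_type]
    calc ∑ u, ∑ r, ∑ x, Real.negMulLog (p u r x)
        = ∑ r, ∑ u, ∑ x, Real.negMulLog (p u r x) := Finset.sum_comm
      _ = ∑ r, ∑ x, ∑ u, Real.negMulLog (p u r x) := by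
          exact Finset.sum_congr rfl fun r _ => Finset.sum_comm
      _ = ∑ r, ∑ x, Real.negMulLog (∑ u, p u r x) := by
          exact Finset.sum_congr rfl fun r _ => Finset.sum_congr rfl fun x _ => key r x
      _ = ∑ x, ∑ r, Real.negMulLog (∑ u, p u r x) := Finset.sum_comm
  rw [hURX, hUX]
  ring
end

section
/- Let U take values in {1,…,ℓ} with P_U(i)=ψᵢ/θ for positive integers ψᵢ with Σψᵢ=θ. Define A' with P(A'=j|U=i)=1/ψᵢ for 1≤j≤ψᵢ, A = Σ_{i<U} ψᵢ + A' − 1, R uniform on {0,…,θ−1} independent of (U,A'), and X = (A+R) mod θ. Then (R,U,X) satisfies I(U;X)=0, H(U|RX)=0, I(U;R)=0, and moreover I(R;U,X) = Σᵢ P_U(i) log(θ/ψᵢ). -/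
/-! Given `U = u`, the residue `A = X - R` ranges over the block `offsetPsi ψ u + [0, ψ u)`, and
these blocks tile `ZMod θ`; every point of the support carries mass `1/θ²`. Since `r ↦ x - r`
and `x ↦ x - r` are bijections of `ZMod θ`, each fibre of `p` over `(u, x)` or `(u, r)` has mass
`ψ u / θ²`, so `X` and `R` are uniform and independent of `U`, while `U` is read off from
`X - R` because the blocks are disjoint. Then `H(R) = log θ`, `H(U, X) = H(U) + log θ` and
`H(U, R, X) = log θ²`, whence `I(R; U, X) = H(U) = Σᵢ (ψᵢ/θ) log(θ/ψᵢ)`. -/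

open Finset

/-- `offsetPsi ψ u = Σ_{j < u} ψ j`, the offset used by the partition code. -/
def offsetPsi {ℓ : ℕ} (ψ : Fin ℓ → ℕ) (u : Fin ℓ) : ℕ :=
  ∑ j ∈ Finset.univ.filter (fun j => j < u), ψ j

section Offsets

variable {ℓ : ℕ} (ψ : Fin ℓ → ℕ)

lemma offsetPsi_add_self (u : Fin ℓ) : offsetPsi ψ u + ψ u = ∑ j ∈ Iic u, ψ j := by
  rw [offsetPsi, filter_gt_eq_Iio, sum_Iio_add_eq_sum_Iic]

lemma offsetPsi_add_self_le_sum (u : Fin ℓ) : offsetPsi ψ u + ψ u ≤ ∑ i, ψ i := by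
  rw [offsetPsi_add_self]
  exact sum_le_sum_of_subset (subset_univ _)

lemma offsetPsi_add_self_le_of_lt {u v : Fin ℓ} (h : u < v) :
    offsetPsi ψ u + ψ u ≤ offsetPsi ψ v := by
  rw [offsetPsi_add_self, offsetPsi, filter_gt_eq_Iio]
  exact sum_le_sum_of_subset fun j hj => mem_Iio.2 ((mem_Iic.1 hj).trans_lt h)

end Offsets

/-- The values of `A = X - R` given `U = u`. -/
def block {ℓ : ℕ} (θ : ℕ) (ψ : Fin ℓ → ℕ) (u : Fin ℓ) : Finset (ZMod θ) :=
  (range (ψ u)).image fun a => ((offsetPsi ψ u + a : ℕ) : ZMod θ)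

section Blocks

variable {ℓ θ : ℕ} {ψ : Fin ℓ → ℕ} (hθ : ∑ i, ψ i ≤ θ)
include hθ

lemma val_natCast_offsetPsi_add {u : Fin ℓ} {a : ℕ} (ha : a < ψ u) :
    ((offsetPsi ψ u + a : ℕ) : ZMod θ).val = offsetPsi ψ u + a :=
  ZMod.val_cast_of_lt (by have := offsetPsi_add_self_le_sum ψ u; omega)

lemma mem_block_iff [NeZero θ] {u : Fin ℓ} {d : ZMod θ} :
    d ∈ block θ ψ u ↔ offsetPsi ψ u ≤ d.val ∧ d.val < offsetPsi ψ u + ψ u := by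
  constructor
  · intro h
    obtain ⟨a, ha, rfl⟩ := mem_image.1 h
    have ha := mem_range.1 ha
    rw [val_natCast_offsetPsi_add hθ ha]
    omega
  · rintro ⟨h₁, h₂⟩
    refine mem_image.2 ⟨d.val - offsetPsi ψ u, mem_range.2 (by omega), ?_⟩
    rw [Nat.add_sub_cancel' h₁, ZMod.natCast_zmod_val]

lemma card_block (u : Fin ℓ) : #(block θ ψ u) = ψ u := by
  rw [block, card_image_of_injOn, card_range]
  intro a ha b hb hab
  have := congrArg ZMod.val hab
  simp only [val_natCast_offsetPsi_add hθ (mem_range.1 ha),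
    val_natCast_offsetPsi_add hθ (mem_range.1 hb)] at this
  omega

lemma eq_of_mem_block_of_mem_block [NeZero θ] {u v : Fin ℓ} {d : ZMod θ}
    (hu : d ∈ block θ ψ u) (hv : d ∈ block θ ψ v) : u = v := by
  rw [mem_block_iff hθ] at hu hv
  rcases lt_trichotomy u v with h | h | h
  · have := offsetPsi_add_self_le_of_lt ψ h; omega
  · exact h
  · have := offsetPsi_add_self_le_of_lt ψ h; omega

end Blocks

lemma nsmul_negMulLog_inv (n : ℕ) : n • Real.negMulLog (n : ℝ)⁻¹ = Real.log n := by
  rcases Nat.eq_zero_or_pos n with rfl | hn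
  · simp
  · have : (n : ℝ) ≠ 0 := by positivity
    rw [nsmul_eq_mul, Real.negMulLog, Real.log_inv]
    field_simp

lemma negMulLog_div (a b : ℝ) : Real.negMulLog (a / b) = a / b * Real.log (b / a) := by
  rw [Real.negMulLog, ← inv_div b a, Real.log_inv]
  ring

lemma ent_const_inv_card (α : Type*) [Fintype α] :
    ent (fun _ : α => (Fintype.card α : ℝ)⁻¹) = Real.log (Fintype.card α) := by
  rw [ent, sum_const, card_univ, nsmul_negMulLog_inv]

lemma ent_prod_div_card {α β : Type*} [Fintype α] [Fintype β] [Nonempty β] (f : α → ℝ) :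
    ent (fun t : α × β => f t.1 / Fintype.card β)
      = ent f + (∑ a, f a) * Real.log (Fintype.card β) := by
  have hβ : (Fintype.card β : ℝ) ≠ 0 := by positivity
  simp only [ent, Fintype.sum_prod_type, div_eq_mul_inv, Real.negMulLog_mul, sum_const,
    card_univ, sum_add_distrib, sum_mul, nsmul_eq_mul]
  refine congrArg₂ (· + ·) (sum_congr rfl fun a _ => mul_inv_cancel_left₀ hβ _)
    (sum_congr rfl fun a _ => ?_)
  rw [mul_left_comm, ← nsmul_eq_mul, nsmul_negMulLog_inv]

lemma sum_ite_sub_mem_left {G M : Type*} [AddCommGroup G] [Fintype G] [DecidableEq G]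
    [AddCommMonoid M] (s : Finset G) (x : G) (c : M) :
    ∑ r, (if x - r ∈ s then c else 0) = #s • c := by
  rw [← sum_const, ← Fintype.sum_ite_mem s fun _ => c]
  exact (Equiv.subLeft x).sum_comp fun d => if d ∈ s then c else 0

lemma sum_ite_sub_mem_right {G M : Type*} [AddCommGroup G] [Fintype G] [DecidableEq G]
    [AddCommMonoid M] (s : Finset G) (r : G) (c : M) :
    ∑ x, (if x - r ∈ s then c else 0) = #s • c := by
  rw [← sum_const, ← Fintype.sum_ite_mem s fun _ => c]
  exact (Equiv.subRight r).sum_comp fun d => if d ∈ s then c else 0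

/-- On its support the mass is `P(U = u) P(A' | U = u) P(R = r) = (ψᵤ/θ)(1/ψᵤ)(1/θ) = 1/θ²`. -/
noncomputable def partitionCode {ℓ : ℕ} (θ : ℕ) (ψ : Fin ℓ → ℕ) (u : Fin ℓ) (r x : ZMod θ) : ℝ :=
  if x - r ∈ block θ ψ u then ((θ : ℝ) ^ 2)⁻¹ else 0

open scoped Classical in
lemma ite_exists_eq_partitionCode {ℓ θ : ℕ} {ψ : Fin ℓ → ℕ} (u : Fin ℓ) (r x : ZMod θ) :
    (if ∃ a : ℕ, a < ψ u ∧ (x - r : ZMod θ) = ((offsetPsi ψ u + a : ℕ) : ZMod θ)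
      then ((ψ u : ℝ) / θ) / ((ψ u : ℝ) * θ) else 0) = partitionCode θ ψ u r x := by
  have hmem : (∃ a : ℕ, a < ψ u ∧ (x - r : ZMod θ) = ((offsetPsi ψ u + a : ℕ) : ZMod θ)) ↔
      x - r ∈ block θ ψ u := by
    simp only [block, mem_image, mem_range, eq_comm]
  by_cases h : ∃ a : ℕ, a < ψ u ∧ (x - r : ZMod θ) = ((offsetPsi ψ u + a : ℕ) : ZMod θ)
  · obtain ⟨a, ha, -⟩ := id h
    have : (ψ u : ℝ) ≠ 0 := Nat.cast_ne_zero.2 (by omega)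
    rw [if_pos h, partitionCode, if_pos (hmem.1 h)]
    field_simp
  · rw [if_neg h, partitionCode, if_neg (mt hmem.2 h)]

section PartitionCode

variable {ℓ θ : ℕ} [NeZero θ] {ψ : Fin ℓ → ℕ} (hθ : ∑ i, ψ i = θ)
include hθ

lemma partitionCode_marginal_UX (u : Fin ℓ) (x : ZMod θ) :
    ∑ r, partitionCode θ ψ u r x = ψ u / (θ : ℝ) ^ 2 := by
  simp only [partitionCode]
  rw [sum_ite_sub_mem_left, card_block hθ.le, nsmul_eq_mul, div_eq_mul_inv]

lemma partitionCode_marginal_UR (u : Fin ℓ) (r : ZMod θ) :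
    ∑ x, partitionCode θ ψ u r x = ψ u / (θ : ℝ) ^ 2 := by
  simp only [partitionCode]
  rw [sum_ite_sub_mem_right, card_block hθ.le, nsmul_eq_mul, div_eq_mul_inv]

lemma partitionCode_marginal_U (u : Fin ℓ) :
    ∑ r, ∑ x, partitionCode θ ψ u r x = ψ u / θ := by
  have : (θ : ℝ) ≠ 0 := NeZero.ne _
  simp only [partitionCode_marginal_UR hθ, sum_const, card_univ, ZMod.card, nsmul_eq_mul]
  field_simp

lemma partitionCode_marginal_X (x : ZMod θ) :
    ∑ u, ∑ r, partitionCode θ ψ u r x = (θ : ℝ)⁻¹ := by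
  have : (θ : ℝ) ≠ 0 := NeZero.ne _
  simp only [partitionCode_marginal_UX hθ, ← sum_div, ← Nat.cast_sum, hθ]
  field_simp

lemma partitionCode_marginal_R (r : ZMod θ) :
    ∑ u, ∑ x, partitionCode θ ψ u r x = (θ : ℝ)⁻¹ := by
  have : (θ : ℝ) ≠ 0 := NeZero.ne _
  simp only [partitionCode_marginal_UR hθ, ← sum_div, ← Nat.cast_sum, hθ]
  field_simp

lemma ent_partitionCode :
    ent (fun t : Fin ℓ × ZMod θ × ZMod θ => partitionCode θ ψ t.1 t.2.1 t.2.2)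
      = Real.log ((θ : ℝ) ^ 2) := by
  have hnegMulLog : ∀ u r x, Real.negMulLog (partitionCode θ ψ u r x)
      = if x - r ∈ block θ ψ u then Real.negMulLog ((θ : ℝ) ^ 2)⁻¹ else 0 := by
    intro u r x
    unfold partitionCode
    split_ifs <;> simp
  simp only [ent, Fintype.sum_prod_type, hnegMulLog, sum_ite_sub_mem_right, card_block hθ.le,
    sum_const, card_univ, ZMod.card, ← sum_smul, smul_smul]
  rw [← mul_sum, hθ, ← sq, ← Nat.cast_pow, nsmul_negMulLog_inv]

lemma partitionCode_indep_UX (u : Fin ℓ) (x : ZMod θ) :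
    ∑ r, partitionCode θ ψ u r x
      = (∑ r, ∑ x', partitionCode θ ψ u r x') * (∑ u', ∑ r, partitionCode θ ψ u' r x) := by
  rw [partitionCode_marginal_UX hθ, partitionCode_marginal_U hθ, partitionCode_marginal_X hθ]
  ring

lemma partitionCode_indep_UR (u : Fin ℓ) (r : ZMod θ) :
    ∑ x, partitionCode θ ψ u r x
      = (∑ r', ∑ x, partitionCode θ ψ u r' x) * (∑ u', ∑ x, partitionCode θ ψ u' r x) := by
  rw [partitionCode_marginal_UR hθ, partitionCode_marginal_U hθ, partitionCode_marginal_R hθ]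
  ring

lemma exists_partitionCode_decoder :
    ∃ g : ZMod θ → ZMod θ → Fin ℓ, ∀ u r x, partitionCode θ ψ u r x ≠ 0 → u = g r x := by
  classical
  obtain ⟨u₀, -, -⟩ := exists_ne_zero_of_sum_ne_zero (hθ.trans_ne (NeZero.ne θ))
  refine ⟨fun r x => if h : ∃ u, x - r ∈ block θ ψ u then h.choose else u₀, fun u r x hne => ?_⟩
  have hu : x - r ∈ block θ ψ u := by
    by_contra h
    exact hne (if_neg h)
  have h : ∃ u, x - r ∈ block θ ψ u := ⟨u, hu⟩
  dsimp only
  rw [dif_pos h]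
  exact eq_of_mem_block_of_mem_block hθ.le hu h.choose_spec

lemma partitionCode_mutualInfo :
    ent (fun r : ZMod θ => ∑ u, ∑ x, partitionCode θ ψ u r x)
        + ent (fun t : Fin ℓ × ZMod θ => ∑ r, partitionCode θ ψ t.1 r t.2)
        - ent (fun t : Fin ℓ × ZMod θ × ZMod θ => partitionCode θ ψ t.1 t.2.1 t.2.2)
      = ∑ i, ((ψ i : ℝ) / θ) * Real.log ((θ : ℝ) / (ψ i : ℝ)) := by
  have hR : (fun r : ZMod θ => ∑ u, ∑ x, partitionCode θ ψ u r x)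
      = fun _ => ((Fintype.card (ZMod θ) : ℕ) : ℝ)⁻¹ := by
    ext r
    rw [partitionCode_marginal_R hθ, ZMod.card]
  have hUX : (fun t : Fin ℓ × ZMod θ => ∑ r, partitionCode θ ψ t.1 r t.2)
      = fun t => ((ψ t.1 : ℝ) / θ) / Fintype.card (ZMod θ) := by
    ext t
    rw [partitionCode_marginal_UX hθ, ZMod.card, div_div, sq]
  have hU : ∑ i, ((ψ i : ℝ) / θ) = 1 := by
    rw [← sum_div, ← Nat.cast_sum, hθ, div_self (NeZero.ne _)]
  rw [hR, hUX, ent_const_inv_card, ent_prod_div_card fun u => (ψ u : ℝ) / θ,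
    ent_partitionCode hθ, hU, ZMod.card, Real.log_pow, ent]
  simp only [negMulLog_div]
  push_cast
  ring

end PartitionCode

open scoped Classical in
theorem stmt_12_general (ℓ θ : ℕ) [NeZero θ] (ψ : Fin ℓ → ℕ)
    (hθ : ∑ i, ψ i = θ)
    (p : Fin ℓ → ZMod θ → ZMod θ → ℝ)
    -- joint distribution of `(U, R, X)` induced by the partition code
    (hp : ∀ u r x, p u r x =
      if ∃ a : ℕ, a < ψ u ∧ (x - r : ZMod θ) = ((offsetPsi ψ u + a : ℕ) : ZMod θ)
      then ((ψ u : ℝ) / θ) / ((ψ u : ℝ) * θ) else 0) :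
    -- `I(U;X) = 0`
    (∀ u x, (∑ r, p u r x)
      = (∑ r, ∑ x', p u r x') * (∑ u', ∑ r, p u' r x))
    -- `I(U;R) = 0`
    ∧ (∀ u r, (∑ x, p u r x)
      = (∑ r', ∑ x, p u r' x) * (∑ u', ∑ x, p u' r x))
    -- `H(U|RX) = 0`
    ∧ (∃ g : ZMod θ → ZMod θ → Fin ℓ, ∀ u r x, p u r x ≠ 0 → u = g r x)
    -- `I(R;U,X) = Σᵢ P_U(i) log(θ/ψᵢ)`
    ∧ (ent (fun r : ZMod θ => ∑ u, ∑ x, p u r x)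
        + ent (fun t : Fin ℓ × ZMod θ => ∑ r, p t.1 r t.2)
        - ent (fun t : Fin ℓ × ZMod θ × ZMod θ => p t.1 t.2.1 t.2.2)
      = ∑ i, ((ψ i : ℝ) / θ) * Real.log ((θ : ℝ) / (ψ i : ℝ))) := by
  obtain rfl : p = partitionCode θ ψ := by
    ext u r x
    rw [hp, ite_exists_eq_partitionCode]
  exact ⟨partitionCode_indep_UX hθ, partitionCode_indep_UR hθ,
    exists_partitionCode_decoder hθ, partitionCode_mutualInfo hθ⟩

open scoped Classical in
/-- The partition code: `U` has `P_U(i) = ψᵢ/θ`, `A'` is uniform on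
`{1,…,ψ_U}` given `U`, `A = Σ_{i<U} ψᵢ + A' − 1`, `R` is uniform on `ZMod θ`
independent of `(U,A')` and `X = A + R`.  The induced joint distribution `p`
of `(U,R,X)` forms an error-free perfect secrecy system and
`I(R;U,X) = Σᵢ P_U(i) log(θ/ψᵢ)`. -/
theorem stmt_12 (ℓ θ : ℕ) [NeZero θ] (ψ : Fin ℓ → ℕ)
    (hψ : ∀ i, 0 < ψ i) (hθ : ∑ i, ψ i = θ)
    (p : Fin ℓ → ZMod θ → ZMod θ → ℝ)
    -- joint distribution of `(U, R, X)` induced by the partition code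
    (hp : ∀ u r x, p u r x =
      if ∃ a : ℕ, a < ψ u ∧ (x - r : ZMod θ) = ((offsetPsi ψ u + a : ℕ) : ZMod θ)
      then ((ψ u : ℝ) / θ) / ((ψ u : ℝ) * θ) else 0) :
    -- `I(U;X) = 0`
    (∀ u x, (∑ r, p u r x)
      = (∑ r, ∑ x', p u r x') * (∑ u', ∑ r, p u' r x))
    -- `I(U;R) = 0`
    ∧ (∀ u r, (∑ x, p u r x)
      = (∑ r', ∑ x, p u r' x) * (∑ u', ∑ x, p u' r x))
    -- `H(U|RX) = 0`
    ∧ (∃ g : ZMod θ → ZMod θ → Fin ℓ, ∀ u r x, p u r x ≠ 0 → u = g r x)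
    -- `I(R;U,X) = Σᵢ P_U(i) log(θ/ψᵢ)`
    ∧ (ent (fun r : ZMod θ => ∑ u, ∑ x, p u r x)
        + ent (fun t : Fin ℓ × ZMod θ => ∑ r, p t.1 r t.2)
        - ent (fun t : Fin ℓ × ZMod θ × ZMod θ => p t.1 t.2.1 t.2.2)
      = ∑ i, ((ψ i : ℝ) / θ) * Real.log ((θ : ℝ) / (ψ i : ℝ))) :=
  stmt_12_general ℓ θ ψ hθ p hp
end

section
/- For the partition code with ψᵢ = θ·P_U(i) (all integers), the induced error-free perfect secrecy system achieves I(R;U,X) = H(U). -/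
open Finset

open scoped Classical in
/-- For the partition code with weights `ψᵢ = θ·P_U(i)` (all integers), the
induced error-free perfect secrecy system achieves minimal expected key
consumption: `I(R;U,X) = H(U)`. -/
theorem stmt_13 (ℓ θ : ℕ) [NeZero θ] (ψ : Fin ℓ → ℕ) (PU : Fin ℓ → ℝ)
    (hPUnn : ∀ i, 0 ≤ PU i) (hPUsum : ∑ i, PU i = 1)
    (hψ : ∀ i, (ψ i : ℝ) = (θ : ℝ) * PU i)
    (hψpos : ∀ i, 0 < ψ i)
    (p : Fin ℓ → ZMod θ → ZMod θ → ℝ)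
    -- joint distribution of `(U, R, X)` induced by the partition code
    (hp : ∀ u r x, p u r x =
      if ∃ a : ℕ, a < ψ u ∧ (x - r : ZMod θ) = ((offsetPsi ψ u + a : ℕ) : ZMod θ)
      then PU u / ((ψ u : ℝ) * θ) else 0) :
    -- `I(R;U,X) = H(U)`
    ent (fun r : ZMod θ => ∑ u, ∑ x, p u r x)
        + ent (fun t : Fin ℓ × ZMod θ => ∑ r, p t.1 r t.2)
        - ent (fun t : Fin ℓ × ZMod θ × ZMod θ => p t.1 t.2.1 t.2.2)
      = ent PU := by
  classical
  have hθ : 0 < θ := Nat.pos_of_ne_zero (NeZero.ne θ)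
  have hθR : (0:ℝ) < θ := by exact_mod_cast hθ
  have hθR' : (θ:ℝ) ≠ 0 := ne_of_gt hθR
  have hPUpos : ∀ u, 0 < PU u := by
    intro u
    have h1 : (0:ℝ) < (ψ u : ℝ) := by exact_mod_cast hψpos u
    nlinarith [hψ u]
  -- total weight
  have hsumψ : ∑ i, (ψ i : ℝ) = θ := by
    simp only [hψ, ← Finset.mul_sum, hPUsum, mul_one]
  -- offset bound
  have hoff : ∀ u, offsetPsi ψ u + ψ u ≤ θ := by
    intro u
    have hmem : u ∉ Finset.univ.filter (fun j => j < u) := by simp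
    have h1 : offsetPsi ψ u + ψ u
        = ∑ j ∈ insert u (Finset.univ.filter (fun j => j < u)), ψ j := by
      rw [Finset.sum_insert hmem, offsetPsi]; ring
    have h2 : ∑ j ∈ insert u (Finset.univ.filter (fun j => j < u)), ψ j
        ≤ ∑ j, ψ j :=
      Finset.sum_le_sum_of_subset (Finset.subset_univ _)
    have h3 : ∑ j, ψ j = θ := by exact_mod_cast hsumψ
    omega
  -- the image set
  set S : Fin ℓ → Finset (ZMod θ) :=
    fun u => (Finset.range (ψ u)).image
      (fun a => ((offsetPsi ψ u + a : ℕ) : ZMod θ)) with hS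
  have hmemS : ∀ u (v : ZMod θ),
      (∃ a : ℕ, a < ψ u ∧ v = ((offsetPsi ψ u + a : ℕ) : ZMod θ)) ↔ v ∈ S u := by
    intro u v
    simp only [hS, Finset.mem_image, Finset.mem_range]
    constructor
    · rintro ⟨a, ha, hv⟩; exact ⟨a, ha, hv.symm⟩
    · rintro ⟨a, ha, hv⟩; exact ⟨a, ha, hv.symm⟩
  have hcardS : ∀ u, (S u).card = ψ u := by
    intro u
    rw [hS]
    rw [Finset.card_image_of_injOn, Finset.card_range]
    intro a ha b hb hab
    simp only [Finset.mem_coe, Finset.mem_range] at ha hb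
    have ha' : offsetPsi ψ u + a < θ := by have := hoff u; omega
    have hb' : offsetPsi ψ u + b < θ := by have := hoff u; omega
    have := congrArg ZMod.val hab
    rw [ZMod.val_natCast_of_lt ha', ZMod.val_natCast_of_lt hb'] at this
    omega
  set c : ℝ := (θ:ℝ)⁻¹ * (θ:ℝ)⁻¹ with hc
  have hcval : ∀ u, PU u / ((ψ u : ℝ) * θ) = c := by
    intro u
    rw [hψ u, hc, div_eq_iff (mul_ne_zero (mul_ne_zero hθR' (hPUpos u).ne') hθR')]
    symm
    calc (θ:ℝ)⁻¹ * (θ:ℝ)⁻¹ * ((θ:ℝ) * PU u * θ)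
        = ((θ:ℝ)⁻¹ * θ) * ((θ:ℝ)⁻¹ * θ) * PU u := by ring
      _ = PU u := by rw [inv_mul_cancel₀ hθR']; ring
  have hpif : ∀ u r x, p u r x = if (x - r : ZMod θ) ∈ S u then c else 0 := by
    intro u r x
    rw [hp u r x, hcval u]
    exact if_congr (hmemS u (x - r)) rfl rfl
  -- sum over x
  have hX : ∀ u r, ∑ x, p u r x = (ψ u : ℝ) * c := by
    intro u r
    simp only [hpif]
    rw [Fintype.sum_equiv (Equiv.subRight r)
      (fun x => if (x - r : ZMod θ) ∈ S u then c else 0)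
      (fun y => if y ∈ S u then c else 0) (fun x => rfl)]
    rw [Finset.sum_ite_mem, Finset.univ_inter, Finset.sum_const, hcardS,
      nsmul_eq_mul]
  -- sum over r
  have hR : ∀ u x, ∑ r, p u r x = (ψ u : ℝ) * c := by
    intro u x
    simp only [hpif]
    rw [Fintype.sum_equiv (Equiv.subLeft x)
      (fun r => if (x - r : ZMod θ) ∈ S u then c else 0)
      (fun y => if y ∈ S u then c else 0) (fun r => rfl)]
    rw [Finset.sum_ite_mem, Finset.univ_inter, Finset.sum_const, hcardS,
      nsmul_eq_mul]
  have hψc : ∀ u, (ψ u : ℝ) * c = PU u * (θ:ℝ)⁻¹ := by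
    intro u
    rw [hψ u, hc]
    field_simp
  -- entropy 1
  have hE1 : ent (fun r : ZMod θ => ∑ u, ∑ x, p u r x) = Real.log θ := by
    have hinner : ∀ r : ZMod θ, ∑ u, ∑ x, p u r x = (θ:ℝ)⁻¹ := by
      intro r
      simp only [hX]
      rw [← Finset.sum_mul, hsumψ, hc]
      field_simp
    unfold ent
    simp only [hinner]
    rw [Finset.sum_const, Finset.card_univ, ZMod.card, nsmul_eq_mul]
    rw [Real.negMulLog, Real.log_inv]
    field_simp
  -- entropy 2
  have hE2 : ent (fun t : Fin ℓ × ZMod θ => ∑ r, p t.1 r t.2)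
      = Real.log θ + ent PU := by
    unfold ent
    rw [Fintype.sum_prod_type]
    simp only [hR, hψc]
    have hterm : ∀ u : Fin ℓ,
        ∑ _x : ZMod θ, Real.negMulLog (PU u * (θ:ℝ)⁻¹)
        = PU u * Real.log θ + Real.negMulLog (PU u) := by
      intro u
      rw [Finset.sum_const, Finset.card_univ, ZMod.card, nsmul_eq_mul]
      rw [Real.negMulLog_mul]
      simp only [Real.negMulLog, Real.log_inv]
      field_simp
      ring
    simp only [hterm]
    rw [Finset.sum_add_distrib, ← Finset.sum_mul, hPUsum, one_mul]
  -- entropy 3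
  have hE3 : ent (fun t : Fin ℓ × ZMod θ × ZMod θ => p t.1 t.2.1 t.2.2)
      = 2 * Real.log θ := by
    unfold ent
    rw [Fintype.sum_prod_type]
    have hterm : ∀ u : Fin ℓ,
        ∑ q : ZMod θ × ZMod θ, Real.negMulLog (p u q.1 q.2)
        = (θ:ℝ) * ((ψ u : ℝ) * Real.negMulLog c) := by
      intro u
      rw [Fintype.sum_prod_type]
      have hin : ∀ r : ZMod θ, ∑ x : ZMod θ, Real.negMulLog (p u r x)
          = (ψ u : ℝ) * Real.negMulLog c := by
        intro r
        simp only [hpif]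
        have : ∀ x : ZMod θ, Real.negMulLog (if (x - r : ZMod θ) ∈ S u then c else 0)
            = if (x - r : ZMod θ) ∈ S u then Real.negMulLog c else 0 := by
          intro x
          split <;> simp [Real.negMulLog_zero]
        simp only [this]
        rw [Fintype.sum_equiv (Equiv.subRight r)
          (fun x => if (x - r : ZMod θ) ∈ S u then Real.negMulLog c else 0)
          (fun y => if y ∈ S u then Real.negMulLog c else 0) (fun x => rfl)]
        rw [Finset.sum_ite_mem, Finset.univ_inter, Finset.sum_const, hcardS,
          nsmul_eq_mul]
      simp only [hin]
      rw [Finset.sum_const, Finset.card_univ, ZMod.card, nsmul_eq_mul]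
    simp only [hterm]
    rw [← Finset.mul_sum, ← Finset.sum_mul, hsumψ]
    have : Real.negMulLog c = (θ:ℝ)⁻¹ * (θ:ℝ)⁻¹ * (2 * Real.log θ) := by
      rw [hc, Real.negMulLog, Real.log_mul (by positivity) (by positivity),
        Real.log_inv]
      ring
    rw [this]
    field_simp
  rw [hE1, hE2, hE3]
  ring
end

section
/- For a partition code with weights Ψ=(ψ₁,…,ψ_ℓ) and θ=Σψᵢ, the expected key consumption equals I(R;U,X) = H(U) + D(P_U ‖ Q_U), where Q_U(i) = ψᵢ/θ. -/
open Finset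

lemma key_alg (t ps pu : ℝ) (ht : 0 < t) (hps : 0 < ps) (hpu : 0 ≤ pu) :
    pu * Real.log t + t * Real.negMulLog (pu / t)
      - t * ps * Real.negMulLog (pu / (ps * t))
    = Real.negMulLog pu + pu * Real.log (pu / (ps / t)) := by
  rcases eq_or_lt_of_le hpu with h | h
  · simp [← h, Real.negMulLog]
  · have ht' := ht.ne'
    have hps' := hps.ne'
    have hpu' := h.ne'
    rw [Real.negMulLog, Real.negMulLog, Real.negMulLog,
      Real.log_div hpu' ht', Real.log_div hpu' (by positivity),
      Real.log_mul hps' ht', Real.log_div hpu' (by positivity),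
      Real.log_div hps' ht']
    field_simp
    ring

open scoped Classical in
/-- For a partition code with weights `Ψ = (ψ₁,…,ψ_ℓ)` and `θ = Σψᵢ`, the
expected key consumption is `I(R;U,X) = H(U) + D(P_U ‖ Q_U)` where
`Q_U(i) = ψᵢ/θ`. -/
theorem stmt_14 (ℓ θ : ℕ) [NeZero θ] (ψ : Fin ℓ → ℕ) (PU : Fin ℓ → ℝ)
    (hPUnn : ∀ i, 0 ≤ PU i) (hPUsum : ∑ i, PU i = 1)
    (hψpos : ∀ i, 0 < ψ i) (hθ : ∑ i, ψ i = θ)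
    (p : Fin ℓ → ZMod θ → ZMod θ → ℝ)
    -- joint distribution of `(U, R, X)` induced by the partition code
    (hp : ∀ u r x, p u r x =
      if ∃ a : ℕ, a < ψ u ∧ (x - r : ZMod θ) = ((offsetPsi ψ u + a : ℕ) : ZMod θ)
      then PU u / ((ψ u : ℝ) * θ) else 0) :
    -- `I(R;U,X) = H(U) + D(P_U ‖ Q_U)` with `Q_U(i) = ψᵢ/θ`
    ent (fun r : ZMod θ => ∑ u, ∑ x, p u r x)
        + ent (fun t : Fin ℓ × ZMod θ => ∑ r, p t.1 r t.2)
        - ent (fun t : Fin ℓ × ZMod θ × ZMod θ => p t.1 t.2.1 t.2.2)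
      = ent PU + ∑ i, PU i * Real.log (PU i / ((ψ i : ℝ) / θ)) := by
  have hθpos : 0 < θ := Nat.pos_of_ne_zero (NeZero.ne θ)
  have hθR : (0:ℝ) < θ := by exact_mod_cast hθpos
  -- the block of codewords for message u
  set S : Fin ℓ → Finset (ZMod θ) :=
    fun u => (Finset.range (ψ u)).image (fun a => ((offsetPsi ψ u + a : ℕ) : ZMod θ))
    with hS
  -- offsets stay below θ
  have hlt : ∀ (u : Fin ℓ) (a : ℕ), a < ψ u → offsetPsi ψ u + a < θ := by
    intro u a ha
    have h1 : offsetPsi ψ u + ψ u ≤ θ := by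
      rw [← hθ, offsetPsi]
      have hu : u ∉ Finset.univ.filter (fun j => j < u) := by simp
      have := Finset.sum_le_sum_of_subset
        (s := insert u (Finset.univ.filter (fun j => j < u))) (t := Finset.univ)
        (f := ψ) (by intro x _; exact Finset.mem_univ x)
      rwa [Finset.sum_insert hu, add_comm] at this
    omega
  have hcard : ∀ u, (S u).card = ψ u := by
    intro u
    show ((Finset.range (ψ u)).image (fun a => ((offsetPsi ψ u + a : ℕ) : ZMod θ))).card = ψ u
    rw [Finset.card_image_of_injOn, Finset.card_range]
    intro a ha b hb hab
    have ha1 : a < ψ u := by simpa using ha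
    have hb1 : b < ψ u := by simpa using hb
    have ha' := ZMod.val_cast_of_lt (n := θ) (hlt u a ha1)
    have hb' := ZMod.val_cast_of_lt (n := θ) (hlt u b hb1)
    have := congrArg ZMod.val hab
    rw [ha', hb'] at this
    omega
  -- rewrite p via membership in S u
  have hp' : ∀ u r x, p u r x = if (x - r : ZMod θ) ∈ S u then PU u / ((ψ u : ℝ) * θ) else 0 := by
    intro u r x
    rw [hp]
    congr 1
    apply propext
    simp only [hS, Finset.mem_image, Finset.mem_range]
    constructor
    · rintro ⟨a, h1, h2⟩; exact ⟨a, h1, h2.symm⟩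
    · rintro ⟨a, h1, h2⟩; exact ⟨a, h1, h2.symm⟩
  have hψR : ∀ u, (0:ℝ) < ψ u := fun u => by exact_mod_cast hψpos u
  -- sum over x for fixed u, r (here written for a general weight c)
  have sum_mem : ∀ (u : Fin ℓ) (c : ℝ), ∑ y : ZMod θ, (if y ∈ S u then c else 0) = ψ u * c := by
    intro u c
    rw [Finset.sum_ite_mem, Finset.univ_inter, Finset.sum_const, hcard, nsmul_eq_mul]
  have sumx : ∀ (u : Fin ℓ) (r : ZMod θ) (c : ℝ),
      (∑ x : ZMod θ, if (x - r : ZMod θ) ∈ S u then c else 0) = ψ u * c := by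
    intro u r c
    rw [← sum_mem u c]
    exact Fintype.sum_equiv (Equiv.subRight r) _ _ (fun x => rfl)
  have sumr : ∀ (u : Fin ℓ) (x : ZMod θ) (c : ℝ),
      (∑ r : ZMod θ, if (x - r : ZMod θ) ∈ S u then c else 0) = ψ u * c := by
    intro u x c
    rw [← sum_mem u c]
    exact Fintype.sum_equiv (Equiv.subLeft x) _ _ (fun r => rfl)
  -- marginal of R is uniform
  have margR : ∀ r : ZMod θ, (∑ u, ∑ x, p u r x) = 1 / θ := by
    intro r
    have : ∀ u, (∑ x, p u r x) = PU u / θ := by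
      intro u
      simp only [hp']
      rw [sumx]
      have hn : (ψ u:ℝ) ≠ 0 := (hψR u).ne'
      have hn2 : (θ:ℝ) ≠ 0 := hθR.ne'
      field_simp
    simp only [this, ← Finset.sum_div, hPUsum]
  -- marginal of (U, X)
  have margUX : ∀ (u : Fin ℓ) (x : ZMod θ), (∑ r, p u r x) = PU u / θ := by
    intro u x
    simp only [hp']
    rw [sumr]
    have hn : (ψ u:ℝ) ≠ 0 := (hψR u).ne'
    have hn2 : (θ:ℝ) ≠ 0 := hθR.ne'
    field_simp
  have cardZ : Fintype.card (ZMod θ) = θ := ZMod.card θ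
  -- compute the three entropies
  have e1 : ent (fun r : ZMod θ => ∑ u, ∑ x, p u r x) = Real.log θ := by
    unfold ent
    simp only [margR]
    rw [Finset.sum_const, Finset.card_univ, cardZ, nsmul_eq_mul, Real.negMulLog,
      one_div, Real.log_inv]
    field_simp
  have e2 : ent (fun t : Fin ℓ × ZMod θ => ∑ r, p t.1 r t.2)
      = ∑ u, (θ : ℝ) * Real.negMulLog (PU u / θ) := by
    unfold ent
    rw [Fintype.sum_prod_type]
    refine Finset.sum_congr rfl fun u _ => ?_
    simp only [margUX]
    rw [Finset.sum_const, Finset.card_univ, cardZ, nsmul_eq_mul]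
  have e3 : ent (fun t : Fin ℓ × ZMod θ × ZMod θ => p t.1 t.2.1 t.2.2)
      = ∑ u, (θ : ℝ) * (ψ u : ℝ) * Real.negMulLog (PU u / ((ψ u : ℝ) * θ)) := by
    unfold ent
    rw [Fintype.sum_prod_type]
    refine Finset.sum_congr rfl fun u _ => ?_
    rw [Fintype.sum_prod_type]
    have : ∀ r : ZMod θ, (∑ x, Real.negMulLog (p u r x))
        = (ψ u : ℝ) * Real.negMulLog (PU u / ((ψ u : ℝ) * θ)) := by
      intro r
      simp only [hp', apply_ite Real.negMulLog, Real.negMulLog_zero]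
      exact sumx u r _
    simp only [this]
    rw [Finset.sum_const, Finset.card_univ, cardZ, nsmul_eq_mul, mul_assoc]
  rw [e1, e2, e3]
  have hlog : Real.log θ = ∑ u, PU u * Real.log θ := by
    rw [← Finset.sum_mul, hPUsum, one_mul]
  rw [hlog, ent, ← Finset.sum_add_distrib, ← Finset.sum_add_distrib, ← Finset.sum_sub_distrib]
  refine Finset.sum_congr rfl fun u _ => ?_
  exact key_alg θ (ψ u) (PU u) hθR (hψR u) (hPUnn u)
end

section
/- If U, R, X satisfy I(U;X)=0, H(U|RX)=0, I(U;R)=0 and additionally I(X;R)=0, then max_x P_X(x) ≤ min_{u∈𝒰} P_U(u) and max_r P_R(r) ≤ min_{u∈𝒰} P_U(u). -/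
/-- Under the minimal key consumption conditions
(`I(U;X) = I(U;R) = I(X;R) = 0` and `H(U|XR) = 0`), every ciphertext
probability and every key probability is at most the smallest message
probability: `max_x P_X(x) ≤ min_{u∈𝒰} P_U(u)` and
`max_r P_R(r) ≤ min_{u∈𝒰} P_U(u)`. -/
theorem stmt_15 {𝒰 ℛ 𝒳 : Type*} [Fintype 𝒰] [Fintype ℛ] [Fintype 𝒳]
    (p : 𝒰 → ℛ → 𝒳 → ℝ)
    (hnn : ∀ u r x, 0 ≤ p u r x)
    (hsum : ∑ u, ∑ r, ∑ x, p u r x = 1)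
    -- `I(U;X) = 0`
    (hIUX : ∀ u x, (∑ r, p u r x)
      = (∑ r, ∑ x', p u r x') * (∑ u', ∑ r, p u' r x))
    -- `I(U;R) = 0`
    (hIUR : ∀ u r, (∑ x, p u r x)
      = (∑ r', ∑ x, p u r' x) * (∑ u', ∑ x, p u' r x))
    -- `I(X;R) = 0`
    (hIXR : ∀ r x, (∑ u, p u r x)
      = (∑ u, ∑ x', p u r x') * (∑ u, ∑ r', p u r' x))
    -- `H(U|XR) = 0`
    (hdet : ∃ g : ℛ → 𝒳 → 𝒰, ∀ u r x, p u r x ≠ 0 → u = g r x) :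
    (∀ x u, (∑ r, ∑ x', p u r x') ≠ 0 →
        (∑ u', ∑ r, p u' r x) ≤ ∑ r, ∑ x', p u r x')
    ∧ (∀ r u, (∑ r', ∑ x, p u r' x) ≠ 0 →
        (∑ u', ∑ x, p u' r x) ≤ ∑ r', ∑ x, p u r' x) := by
  obtain ⟨g, hg⟩ := hdet
  have hPU : ∀ u, 0 ≤ ∑ r, ∑ x', p u r x' := fun u =>
    Finset.sum_nonneg fun r _ => Finset.sum_nonneg fun x _ => hnn u r x
  have hPX : ∀ x, 0 ≤ ∑ u', ∑ r, p u' r x := fun x =>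
    Finset.sum_nonneg fun u _ => Finset.sum_nonneg fun r _ => hnn u r x
  have hPR : ∀ r, 0 ≤ ∑ u', ∑ x, p u' r x := fun r =>
    Finset.sum_nonneg fun u _ => Finset.sum_nonneg fun x _ => hnn u r x
  constructor
  · intro x u hu
    by_cases hx : (∑ u', ∑ r, p u' r x) = 0
    · rw [hx]; exact hPU u
    have h1 : ∑ r, p u r x ≠ 0 := by
      rw [hIUX u x]; exact mul_ne_zero hu hx
    obtain ⟨r, -, hr⟩ := Finset.exists_ne_zero_of_sum_ne_zero h1
    have hgu : g r x = u := (hg u r x hr).symm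
    have hsingle : ∑ u', p u' r x = p u r x := by
      refine Finset.sum_eq_single u (fun u' _ hne => ?_)
        (fun h => absurd (Finset.mem_univ u) h)
      by_contra h
      exact hne ((hg u' r x h).trans hgu)
    have hpos : 0 < p u r x := lt_of_le_of_ne (hnn u r x) (Ne.symm hr)
    have hprod : 0 < (∑ u', ∑ x', p u' r x') * (∑ u', ∑ r', p u' r' x) := by
      rw [← hIXR r x, hsingle]; exact hpos
    have hPRr : 0 < ∑ u', ∑ x', p u' r x' := by
      rcases lt_or_eq_of_le (hPR r) with h | h
      · exact h
      · rw [← h] at hprod; simp at hprod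
    have key : (∑ u', ∑ r', p u' r' x) * (∑ u', ∑ x', p u' r x')
        ≤ (∑ r', ∑ x', p u r' x') * (∑ u', ∑ x', p u' r x') := by
      calc (∑ u', ∑ r', p u' r' x) * (∑ u', ∑ x', p u' r x')
          = (∑ u', ∑ x', p u' r x') * (∑ u', ∑ r', p u' r' x) := mul_comm _ _
        _ = ∑ u', p u' r x := (hIXR r x).symm
        _ = p u r x := hsingle
        _ ≤ ∑ x', p u r x' :=
            Finset.single_le_sum (fun x' _ => hnn u r x') (Finset.mem_univ x)
        _ = (∑ r', ∑ x', p u r' x') * (∑ u', ∑ x', p u' r x') := hIUR u r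
    exact le_of_mul_le_mul_right key hPRr
  · intro r u hu
    by_cases hrz : (∑ u', ∑ x, p u' r x) = 0
    · rw [hrz]; exact hPU u
    have h1 : ∑ x, p u r x ≠ 0 := by
      rw [hIUR u r]; exact mul_ne_zero hu hrz
    obtain ⟨x, -, hx⟩ := Finset.exists_ne_zero_of_sum_ne_zero h1
    have hgu : g r x = u := (hg u r x hx).symm
    have hsingle : ∑ u', p u' r x = p u r x := by
      refine Finset.sum_eq_single u (fun u' _ hne => ?_)
        (fun h => absurd (Finset.mem_univ u) h)
      by_contra h
      exact hne ((hg u' r x h).trans hgu)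
    have hpos : 0 < p u r x := lt_of_le_of_ne (hnn u r x) (Ne.symm hx)
    have hprod : 0 < (∑ u', ∑ x', p u' r x') * (∑ u', ∑ r', p u' r' x) := by
      rw [← hIXR r x, hsingle]; exact hpos
    have hPXx : 0 < ∑ u', ∑ r', p u' r' x := by
      rcases lt_or_eq_of_le (hPX x) with h | h
      · exact h
      · rw [← h] at hprod; simp at hprod
    have key : (∑ u', ∑ x', p u' r x') * (∑ u', ∑ r', p u' r' x)
        ≤ (∑ r', ∑ x', p u r' x') * (∑ u', ∑ r', p u' r' x) := by
      calc (∑ u', ∑ x', p u' r x') * (∑ u', ∑ r', p u' r' x)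
          = ∑ u', p u' r x := (hIXR r x).symm
        _ = p u r x := hsingle
        _ ≤ ∑ r', p u r' x :=
            Finset.single_le_sum (fun r' _ => hnn u r' x) (Finset.mem_univ r)
        _ = (∑ r', ∑ x', p u r' x') * (∑ u', ∑ r', p u' r' x) := hIUX u x
    exact le_of_mul_le_mul_right key hPXx
end

section
/- Under the minimal key consumption conditions (I(U;X)=I(U;R)=I(X;R)=0, H(U|XR)=0), both H(X) and H(R) are at least h(π⌊1/π⌋) + π⌊1/π⌋·log⌊1/π⌋ ≥ log(1/π), where π = min_{u∈𝒰} P_U(u) and h is the binary entropy function; the two bounds coincide iff 1/π is an integer. -/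
/-- Binary entropy function, with the convention `h(0) = h(1) = 0`. -/
noncomputable def binEnt (γ : ℝ) : ℝ :=
  Real.negMulLog γ + Real.negMulLog (1 - γ)

/-!
Let `u₀` be an atom of `U` of mass `π > 0`. If `P_X(x) > 0`, independence of `U` and `X` gives
`P(u₀, x) = π P_X(x) > 0`, so `p(u₀, r, x) > 0` for some `r`. Since `U` is a function of `(R, X)`,
`P_R(r) P_X(x) = P(r, x) = p(u₀, r, x) ≤ P(u₀, r) = π P_R(r)`, using independence of `R` and `X`,
then of `U` and `R`. Hence every atom of `X`, and symmetrically of `R`, has mass at most `π`.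

A distribution with all atoms at most `π` is majorized by `(π, …, π, δ)`, with `m = ⌊1/π⌋` atoms
`π` and `δ = 1 - mπ < π`, so its entropy is at least `-mπ log π - δ log δ`, which is the stated
bound. Concretely, the piecewise-linear interpolation of a concave `f` with
`f 0 = 0` at `0, δ, π` lies below `f` on `[0, π]`, and summed over the distribution it is at least
its value on `(π, …, π, δ)`, because `∑ min(qᵢ, δ) ≥ (m + 1) δ`.

Finally the bound equals `log(1/π) + δ (log π - log δ)`, which exceeds `log(1/π)` unless `δ = 0`,
that is, unless `1/π = m`.
-/

open Finset

theorem ConcaveOn.add_slope_mul_sub_le {𝕜 : Type*} [Field 𝕜] [LinearOrder 𝕜] [IsStrictOrderedRing 𝕜]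
    {s : Set 𝕜} {f : 𝕜 → 𝕜} (hf : ConcaveOn 𝕜 s f) {x y t : 𝕜} (hx : x ∈ s) (hy : y ∈ s)
    (hxt : x ≤ t) (hty : t ≤ y) : f x + slope f x y * (t - x) ≤ f t := by
  rcases hxt.eq_or_lt with rfl | hxt
  · simp
  have ht : t ∈ s := hf.1.ordConnected.out hx hy ⟨hxt.le, hty⟩
  have hslope : slope f x y ≤ slope f x t :=
    hf.slope_anti hx ⟨ht, hxt.ne'⟩ ⟨hy, (hxt.trans_le hty).ne'⟩ hty
  have hchord : (t - x) * slope f x t = f t - f x := sub_smul_slope f x t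
  nlinarith [sub_pos.2 hxt]

theorem add_one_mul_le_sum_min {ι : Type*} [Fintype ι] {q : ι → ℝ} {π δ : ℝ} {m : ℕ}
    (hq0 : ∀ i, 0 ≤ q i) (hqπ : ∀ i, q i ≤ π) (hq1 : ∑ i, q i = 1)
    (hδ : m * π + δ = 1) (hδ0 : 0 ≤ δ) (hδπ : δ ≤ π) :
    (m + 1) * δ ≤ ∑ i, min (q i) δ := by
  classical
  set k : ℕ := #{i | δ < q i}
  have hk : (k : ℝ) = ∑ i, if δ < q i then 1 else 0 := natCast_card_filter _ _
  have hlarge : δ * k ≤ ∑ i, min (q i) δ := by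
    rw [hk, mul_sum]
    gcongr with i
    split_ifs with h
    · simp [h.le]
    · simp [hq0 i, hδ0]
  have hsmall : 1 - (π - δ) * k ≤ ∑ i, min (q i) δ := by
    calc 1 - (π - δ) * k = ∑ i, (q i - (π - δ) * if δ < q i then 1 else 0) := by
          rw [sum_sub_distrib, ← mul_sum, hq1, hk]
      _ ≤ ∑ i, min (q i) δ := by
          gcongr with i
          split_ifs with h
          · linarith [min_eq_right h.le, hqπ i]
          · simp [min_eq_left (not_lt.1 h)]
  rcases le_or_gt k m with hkm | hkm
  · have : (k : ℝ) ≤ m := by exact_mod_cast hkm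
    nlinarith
  · have : (m : ℝ) + 1 ≤ k := by exact_mod_cast hkm
    nlinarith

theorem ConcaveOn.mul_add_le_sum {ι : Type*} [Fintype ι] {f : ℝ → ℝ}
    (hf : ConcaveOn ℝ (Set.Ici 0) f) (hf0 : f 0 = 0) {q : ι → ℝ} {π δ : ℝ} {m : ℕ}
    (hq0 : ∀ i, 0 ≤ q i) (hqπ : ∀ i, q i ≤ π) (hq1 : ∑ i, q i = 1)
    (hδ : m * π + δ = 1) (hδ0 : 0 ≤ δ) (hδπ : δ < π) :
    m * f π + f δ ≤ ∑ i, f (q i) := by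
  set s₁ := slope f 0 δ
  set s₂ := slope f δ π
  have hπ : (0 : ℝ) ≤ π := hδ0.trans hδπ.le
  have hs₁ : δ * s₁ = f δ := by simpa [hf0] using sub_smul_slope f 0 δ
  have hs₂ : (π - δ) * s₂ = f π - f δ := sub_smul_slope f δ π
  have hminorant : ∀ t, 0 ≤ t → t ≤ π → s₂ * t + (s₁ - s₂) * min t δ ≤ f t := by
    intro t ht0 htπ
    rcases le_total t δ with htδ | hδt
    · have := hf.add_slope_mul_sub_le Set.self_mem_Ici hδ0 ht0 htδ
      rw [min_eq_left htδ]
      linarith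
    · have := hf.add_slope_mul_sub_le hδ0 hπ hδt htπ
      rw [min_eq_right hδt]
      linarith
  have hmin : (s₁ - s₂) * ((m + 1) * δ) ≤ (s₁ - s₂) * ∑ i, min (q i) δ := by
    rcases hδ0.eq_or_lt with rfl | hδpos
    · simp [hq0]
    have hs : s₂ ≤ s₁ := by
      simpa [s₁, s₂, slope_def_field, hf0] using
        hf.slope_anti_adjacent Set.self_mem_Ici hπ hδpos hδπ
    exact mul_le_mul_of_nonneg_left (add_one_mul_le_sum_min hq0 (fun i => hqπ i) hq1 hδ hδ0 hδπ.le)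
      (sub_nonneg.2 hs)
  calc m * f π + f δ = s₂ + (s₁ - s₂) * ((m + 1) * δ) := by
        linear_combination (-(m + 1 : ℝ)) * hs₁ - m * hs₂ + s₂ * hδ
    _ ≤ s₂ * ∑ i, q i + (s₁ - s₂) * ∑ i, min (q i) δ := by rw [hq1]; linarith
    _ = ∑ i, (s₂ * q i + (s₁ - s₂) * min (q i) δ) := by
        rw [sum_add_distrib, mul_sum, mul_sum]
    _ ≤ ∑ i, f (q i) := sum_le_sum fun i _ => hminorant (q i) (hq0 i) (hqπ i)

noncomputable def floorEntropyBound (π : ℝ) : ℝ :=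
  binEnt (π * ⌊1 / π⌋₊) + π * ⌊1 / π⌋₊ * Real.log ⌊1 / π⌋₊

theorem binEnt_mul_add_mul_log (π m : ℝ) :
    binEnt (π * m) + π * m * Real.log m = m * Real.negMulLog π + Real.negMulLog (1 - π * m) := by
  rw [binEnt, Real.negMulLog_mul]
  unfold Real.negMulLog
  ring

theorem floorEntropyBound_eq (π : ℝ) :
    floorEntropyBound π = ⌊1 / π⌋₊ * Real.negMulLog π + Real.negMulLog (1 - π * ⌊1 / π⌋₊) :=
  binEnt_mul_add_mul_log π _

theorem one_sub_mul_floor_one_div_mem {π : ℝ} (hπ : 0 < π) :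
    1 - π * ⌊1 / π⌋₊ ∈ Set.Ico 0 π := by
  have hle : (⌊1 / π⌋₊ : ℝ) ≤ 1 / π := Nat.floor_le (by positivity)
  have hlt : 1 / π < ⌊1 / π⌋₊ + 1 := Nat.lt_floor_add_one _
  rw [le_div_iff₀ hπ] at hle
  rw [div_lt_iff₀ hπ] at hlt
  exact ⟨by linarith, by linarith⟩

theorem floorEntropyBound_le_ent {ι : Type*} [Fintype ι] {q : ι → ℝ} {π : ℝ} (hπ : 0 < π)
    (hq0 : ∀ i, 0 ≤ q i) (hqπ : ∀ i, q i ≤ π) (hq1 : ∑ i, q i = 1) :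
    floorEntropyBound π ≤ ent q := by
  obtain ⟨hδ0, hδπ⟩ := one_sub_mul_floor_one_div_mem hπ
  rw [floorEntropyBound_eq]
  exact Real.concaveOn_negMulLog.mul_add_le_sum Real.negMulLog_zero hq0 hqπ hq1 (by ring) hδ0 hδπ

theorem floorEntropyBound_eq_log_add (π : ℝ) :
    floorEntropyBound π = Real.log (1 / π)
      + (1 - π * ⌊1 / π⌋₊) * (Real.log π - Real.log (1 - π * ⌊1 / π⌋₊)) := by
  rw [floorEntropyBound_eq, one_div, Real.log_inv, Real.negMulLog, Real.negMulLog]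
  ring

theorem log_one_div_le_floorEntropyBound {π : ℝ} (hπ : 0 < π) :
    Real.log (1 / π) ≤ floorEntropyBound π := by
  obtain ⟨hδ0, hδπ⟩ := one_sub_mul_floor_one_div_mem hπ
  rw [floorEntropyBound_eq_log_add π, le_add_iff_nonneg_right]
  rcases hδ0.eq_or_lt with hδ | hδpos
  · rw [← hδ, zero_mul]
  · exact mul_nonneg hδ0 (sub_nonneg.2 (Real.log_le_log hδpos hδπ.le))

theorem floorEntropyBound_eq_log_iff {π : ℝ} (hπ : 0 < π) :
    floorEntropyBound π = Real.log (1 / π) ↔ ∃ n : ℕ, 1 / π = n := by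
  obtain ⟨hδ0, hδπ⟩ := one_sub_mul_floor_one_div_mem hπ
  rw [floorEntropyBound_eq_log_add π, add_eq_left]
  constructor
  · intro h
    have hδ : 1 - π * ⌊1 / π⌋₊ = 0 := by
      by_contra hδ
      have hδpos := hδ0.lt_of_ne' hδ
      exact (mul_pos hδpos (sub_pos.2 (Real.log_lt_log hδpos hδπ))).ne' h
    exact ⟨⌊1 / π⌋₊, by field_simp; linarith⟩
  · rintro ⟨n, hn⟩
    have : π * n = 1 := by rw [← hn]; field_simp
    simp [hn, this]

section KeyConsumption

variable {𝒰 ℛ 𝒳 : Type*} [Fintype 𝒰] [Fintype ℛ] [Fintype 𝒳] {p : 𝒰 → ℛ → 𝒳 → ℝ}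

theorem marginal_X_le_marginal_U (hnn : ∀ u r x, 0 ≤ p u r x)
    (hIUX : ∀ u x, (∑ r, p u r x) = (∑ r, ∑ x', p u r x') * (∑ u', ∑ r, p u' r x))
    (hIUR : ∀ u r, (∑ x, p u r x) = (∑ r', ∑ x, p u r' x) * (∑ u', ∑ x, p u' r x))
    (hIXR : ∀ r x, (∑ u, p u r x) = (∑ u, ∑ x', p u r x') * (∑ u, ∑ r', p u r' x))
    {g : ℛ → 𝒳 → 𝒰} (hg : ∀ u r x, p u r x ≠ 0 → u = g r x)
    {u₀ : 𝒰} (hu₀ : 0 < ∑ r, ∑ x, p u₀ r x) (x : 𝒳) :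
    ∑ u, ∑ r, p u r x ≤ ∑ r, ∑ x, p u₀ r x := by
  rcases (sum_nonneg fun u _ => sum_nonneg fun r _ => hnn u r x :
    0 ≤ ∑ u, ∑ r, p u r x).eq_or_lt with hx | hx
  · exact hx ▸ hu₀.le
  obtain ⟨r, -, hr⟩ : ∃ r ∈ univ, p u₀ r x ≠ 0 :=
    exists_ne_zero_of_sum_ne_zero (by rw [hIUX]; positivity)
  have hcollapse : ∑ u, p u r x = p u₀ r x :=
    sum_eq_single u₀ (fun u _ hu => by_contra fun h => hu ((hg u r x h).trans (hg u₀ r x hr).symm))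
      (by simp)
  have hle : p u₀ r x ≤ (∑ r, ∑ x, p u₀ r x) * ∑ u, ∑ x', p u r x' :=
    hIUR u₀ r ▸ single_le_sum (fun x' _ => hnn u₀ r x') (mem_univ x)
  have hjoint : p u₀ r x = (∑ u, ∑ x', p u r x') * ∑ u, ∑ r, p u r x := hcollapse ▸ hIXR r x
  have hR : 0 < ∑ u, ∑ x', p u r x' :=
    pos_of_mul_pos_left (hjoint ▸ (hnn u₀ r x).lt_of_ne' hr) hx.le
  exact le_of_mul_le_mul_left (by linarith) hR

theorem marginal_R_le_marginal_U (hnn : ∀ u r x, 0 ≤ p u r x)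
    (hIUX : ∀ u x, (∑ r, p u r x) = (∑ r, ∑ x', p u r x') * (∑ u', ∑ r, p u' r x))
    (hIUR : ∀ u r, (∑ x, p u r x) = (∑ r', ∑ x, p u r' x) * (∑ u', ∑ x, p u' r x))
    (hIXR : ∀ r x, (∑ u, p u r x) = (∑ u, ∑ x', p u r x') * (∑ u, ∑ r', p u r' x))
    {g : ℛ → 𝒳 → 𝒰} (hg : ∀ u r x, p u r x ≠ 0 → u = g r x)
    {u₀ : 𝒰} (hu₀ : 0 < ∑ r, ∑ x, p u₀ r x) (r : ℛ) :
    ∑ u, ∑ x, p u r x ≤ ∑ r, ∑ x, p u₀ r x := by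
  have key := marginal_X_le_marginal_U (p := fun u x r => p u r x) (fun u x r => hnn u r x)
    (fun u r => by rw [hIUR, sum_comm]) (fun u x => by rw [hIUX, sum_comm])
    (fun x r => by rw [hIXR, mul_comm]) (g := fun x r => g r x) (fun u x r => hg u r x)
    (u₀ := u₀) (by rwa [sum_comm]) r
  rwa [sum_comm (γ := 𝒳)] at key

end KeyConsumption

theorem stmt_16_general {𝒰 ℛ 𝒳 : Type*} [Fintype 𝒰] [Fintype ℛ] [Fintype 𝒳]
    (p : 𝒰 → ℛ → 𝒳 → ℝ)
    (hnn : ∀ u r x, 0 ≤ p u r x)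
    (hsum : ∑ u, ∑ r, ∑ x, p u r x = 1)
    (hIUX : ∀ u x, (∑ r, p u r x)
      = (∑ r, ∑ x', p u r x') * (∑ u', ∑ r, p u' r x))
    (hIUR : ∀ u r, (∑ x, p u r x)
      = (∑ r', ∑ x, p u r' x) * (∑ u', ∑ x, p u' r x))
    (hIXR : ∀ r x, (∑ u, p u r x)
      = (∑ u, ∑ x', p u r x') * (∑ u, ∑ r', p u r' x))
    (hdet : ∃ g : ℛ → 𝒳 → 𝒰, ∀ u r x, p u r x ≠ 0 → u = g r x)
    -- `π = min_{u ∈ 𝒰} P_U(u)` over the support `𝒰` of `U`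
    (π : ℝ)
    (hπ₂ : ∃ u, (∑ r, ∑ x, p u r x) = π ∧ π ≠ 0) :
    (binEnt (π * ⌊1 / π⌋₊) + π * ⌊1 / π⌋₊ * Real.log ⌊1 / π⌋₊
        ≤ ent (fun x : 𝒳 => ∑ u, ∑ r, p u r x))
    ∧ (binEnt (π * ⌊1 / π⌋₊) + π * ⌊1 / π⌋₊ * Real.log ⌊1 / π⌋₊
        ≤ ent (fun r : ℛ => ∑ u, ∑ x, p u r x))
    ∧ (Real.log (1 / π)
        ≤ binEnt (π * ⌊1 / π⌋₊) + π * ⌊1 / π⌋₊ * Real.log ⌊1 / π⌋₊)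
    ∧ (binEnt (π * ⌊1 / π⌋₊) + π * ⌊1 / π⌋₊ * Real.log ⌊1 / π⌋₊
        = Real.log (1 / π) ↔ ∃ n : ℕ, 1 / π = (n : ℝ)) := by
  obtain ⟨g, hg⟩ := hdet
  obtain ⟨u₀, rfl, hu₀⟩ := hπ₂
  have hπ : 0 < ∑ r, ∑ x, p u₀ r x :=
    (sum_nonneg fun r _ => sum_nonneg fun x _ => hnn u₀ r x).lt_of_ne' hu₀
  have hX : ∑ x, ∑ u, ∑ r, p u r x = 1 := by
    rw [← hsum, sum_comm]
    exact sum_congr rfl fun u _ => sum_comm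
  have hR : ∑ r, ∑ u, ∑ x, p u r x = 1 := by rw [← hsum, sum_comm]
  refine ⟨floorEntropyBound_le_ent hπ (fun x => ?_)
      (marginal_X_le_marginal_U hnn hIUX hIUR hIXR hg hπ) hX,
    floorEntropyBound_le_ent hπ (fun r => ?_)
      (marginal_R_le_marginal_U hnn hIUX hIUR hIXR hg hπ) hR,
    log_one_div_le_floorEntropyBound hπ, floorEntropyBound_eq_log_iff hπ⟩
  all_goals exact sum_nonneg fun _ _ => sum_nonneg fun _ _ => hnn _ _ _

/-- Under the minimal key consumption conditions
(`I(U;X) = I(U;R) = I(X;R) = 0`, `H(U|XR) = 0`), both `H(X)` and `H(R)` are at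
least `h(π⌊1/π⌋) + π⌊1/π⌋·log⌊1/π⌋ ≥ log(1/π)` where `π = min_{u∈𝒰} P_U(u)`,
and the two bounds coincide iff `1/π` is an integer. -/
theorem stmt_16 {𝒰 ℛ 𝒳 : Type*} [Fintype 𝒰] [Fintype ℛ] [Fintype 𝒳]
    (p : 𝒰 → ℛ → 𝒳 → ℝ)
    (hnn : ∀ u r x, 0 ≤ p u r x)
    (hsum : ∑ u, ∑ r, ∑ x, p u r x = 1)
    (hIUX : ∀ u x, (∑ r, p u r x)
      = (∑ r, ∑ x', p u r x') * (∑ u', ∑ r, p u' r x))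
    (hIUR : ∀ u r, (∑ x, p u r x)
      = (∑ r', ∑ x, p u r' x) * (∑ u', ∑ x, p u' r x))
    (hIXR : ∀ r x, (∑ u, p u r x)
      = (∑ u, ∑ x', p u r x') * (∑ u, ∑ r', p u r' x))
    (hdet : ∃ g : ℛ → 𝒳 → 𝒰, ∀ u r x, p u r x ≠ 0 → u = g r x)
    -- `π = min_{u ∈ 𝒰} P_U(u)` over the support `𝒰` of `U`
    (π : ℝ)
    (hπ₁ : ∀ u, (∑ r, ∑ x, p u r x) ≠ 0 → π ≤ ∑ r, ∑ x, p u r x)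
    (hπ₂ : ∃ u, (∑ r, ∑ x, p u r x) = π ∧ π ≠ 0) :
    (binEnt (π * ⌊1 / π⌋₊) + π * ⌊1 / π⌋₊ * Real.log ⌊1 / π⌋₊
        ≤ ent (fun x : 𝒳 => ∑ u, ∑ r, p u r x))
    ∧ (binEnt (π * ⌊1 / π⌋₊) + π * ⌊1 / π⌋₊ * Real.log ⌊1 / π⌋₊
        ≤ ent (fun r : ℛ => ∑ u, ∑ x, p u r x))
    ∧ (Real.log (1 / π)
        ≤ binEnt (π * ⌊1 / π⌋₊) + π * ⌊1 / π⌋₊ * Real.log ⌊1 / π⌋₊)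
    ∧ (binEnt (π * ⌊1 / π⌋₊) + π * ⌊1 / π⌋₊ * Real.log ⌊1 / π⌋₊
        = Real.log (1 / π) ↔ ∃ n : ℕ, 1 / π = (n : ℝ)) :=
  stmt_16_general p hnn hsum hIUX hIUR hIXR hdet π hπ₂
end

section
/- If U, R, X satisfy I(U;X)=I(U;R)=I(X;R)=0 and H(U|XR)=0, and some probability mass P_U(u) is irrational, then the supports of X and R cannot both be finite (indeed neither can be finite). -/
open scoped ENNReal

/-!
Since `U = g(X,R)` and `X`, `R` are independent, `P(u,r,x) = [g(x,r) = u] P_R(r) P_X(x)`, and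
the independence of `U` from `X` (resp. `R`) says that each map `g(x,·)` pushes `P_R` forward to
`P_U`, and each `g(·,r)` pushes `P_X` forward to `P_U`. Fix `u` and a `ℚ`-linear `φ : ℝ → ℝ`, and
evaluate `∑_{x,r} [g(x,r) = u] P_R(r) φ(P_X(x))` in two ways: summing over `r` first gives
`P_U(u) φ(1)`, summing over `x` first gives `φ(P_U(u))`, because when the support of `P_X` is
finite `φ` commutes with the inner sum. Choosing `φ` with `φ(1) = 0 ≠ φ(P_U(u))`, which exists
exactly when `P_U(u)` is irrational, gives a contradiction; the same argument applies to `R`.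
-/

theorem Irrational.exists_dual_map_one_eq_zero {x : ℝ} (hx : Irrational x) :
    ∃ f : Module.Dual ℚ ℝ, f 1 = 0 ∧ f x ≠ 0 := by
  have hx' : x ∉ ℚ ∙ (1 : ℝ) := fun h ↦ by
    obtain ⟨q, hq⟩ := Submodule.mem_span_singleton.mp h
    exact hx ⟨q, by simpa using hq⟩
  obtain ⟨f, hfx, hf1⟩ := Submodule.exists_dual_map_eq_bot_of_notMem hx' inferInstance
  exact ⟨f, by simpa [Submodule.map_span] using hf1, hfx⟩

theorem linearMap_map_eq_map_one_mul_of_row_col_sums {A B : Type*} (I : Finset A)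
    (ν : A → ℝ) (μ : B → ℝ) (E : A → B → Prop) [DecidableRel E] (c : ℝ)
    (hν : ∑ a ∈ I, ν a = 1) (hμ : HasSum μ 1)
    (hrow : ∀ a ∈ I, HasSum (fun b ↦ if E a b then μ b else 0) c)
    (hcol : ∀ b, μ b ≠ 0 → ∑ a ∈ I, (if E a b then ν a else 0) = c)
    (φ : ℝ →ₗ[ℚ] ℝ) : φ c = φ 1 * c := by
  set w : B → ℝ := fun b ↦ ∑ a ∈ I, (if E a b then μ b else 0) * φ (ν a)
  have hw : w = fun b ↦ μ b * φ c := funext fun b ↦ by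
    by_cases hb : μ b = 0
    · simp [w, hb]
    · simp only [w, ← hcol b hb, map_sum, Finset.mul_sum]
      congr 1 with a
      split_ifs <;> simp
  have hcols : HasSum w (φ c) := by
    simpa [hw] using hμ.mul_right (φ c)
  have hrows : HasSum w (c * φ 1) := by
    simpa only [← Finset.mul_sum, ← map_sum, hν] using
      hasSum_sum fun a ha ↦ (hrow a ha).mul_right (φ (ν a))
  rw [hcols.unique hrows, mul_comm]

theorem ENNReal.hasSum_toReal_of_tsum_eq {α : Type*} {f : α → ℝ≥0∞} {c : ℝ≥0∞}
    (hf : ∑' x, f x = c) (hc : c ≠ ∞) : HasSum (fun x ↦ (f x).toReal) c.toReal := by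
  rw [← hf, ENNReal.tsum_toReal_eq (ENNReal.ne_top_of_tsum_ne_top (hf ▸ hc))]
  exact ENNReal.hasSum_toReal (hf ▸ hc)

theorem not_irrational_toReal_of_support_finite {A B : Type*} (ν : A → ℝ≥0∞) (μ : B → ℝ≥0∞)
    (E : A → B → Prop) [DecidableRel E] (c : ℝ≥0∞) (hν : ∑' a, ν a = 1) (hμ : ∑' b, μ b = 1)
    (hrow : ∀ a, ν a ≠ 0 → ∑' b, (if E a b then μ b else 0) = c)
    (hcol : ∀ b, μ b ≠ 0 → ∑' a, (if E a b then ν a else 0) = c)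
    (hfin : {a | ν a ≠ 0}.Finite) : ¬ Irrational c.toReal := by
  intro hc
  set I := hfin.toFinset
  have hsupp : ∀ a ∉ I, ν a = 0 := by simp [I]
  have hνtop : ∀ a, ν a ≠ ∞ := ENNReal.ne_top_of_tsum_ne_top (hν ▸ ENNReal.one_ne_top)
  have hνI : ∑ a ∈ I, (ν a).toReal = 1 := by
    rw [← ENNReal.toReal_sum fun a _ ↦ hνtop a, (tsum_eq_sum hsupp).symm.trans hν,
      ENNReal.toReal_one]
  have hrowI : ∀ a ∈ I, HasSum (fun b ↦ if E a b then (μ b).toReal else 0) c.toReal := by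
    intro a ha
    have hrow_a := hrow a (by simpa [I] using ha)
    have hc_top : c ≠ ∞ := ne_top_of_le_ne_top ENNReal.one_ne_top <|
      hrow_a ▸ hμ ▸ ENNReal.tsum_le_tsum fun b ↦ by split_ifs <;> simp
    simpa [apply_ite ENNReal.toReal] using ENNReal.hasSum_toReal_of_tsum_eq hrow_a hc_top
  have hcolI : ∀ b, (μ b).toReal ≠ 0 →
      ∑ a ∈ I, (if E a b then (ν a).toReal else 0) = c.toReal := by
    intro b hb
    rw [← hcol b (fun h ↦ hb (by simp [h])), tsum_eq_sum fun a ha ↦ by simp [hsupp a ha],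
      ENNReal.toReal_sum fun a _ ↦ by split_ifs <;> simp [hνtop a]]
    congr 1 with a
    split_ifs <;> rfl
  obtain ⟨f, hf1, hfc⟩ := hc.exists_dual_map_one_eq_zero
  have hφ := linearMap_map_eq_map_one_mul_of_row_col_sums I _ _ E _ hνI
    (ENNReal.hasSum_toReal_of_tsum_eq hμ ENNReal.one_ne_top) hrowI hcolI
    (Algebra.linearMap ℚ ℝ ∘ₗ f)
  exact hfc (by simpa [hf1] using hφ)

section JointLaw

variable {𝒰 ℛ 𝒳 : Type*} (p : 𝒰 → ℛ → 𝒳 → ℝ≥0∞)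

noncomputable def marginalU (u : 𝒰) : ℝ≥0∞ := ∑' r, ∑' x, p u r x

noncomputable def marginalR (r : ℛ) : ℝ≥0∞ := ∑' u, ∑' x, p u r x

noncomputable def marginalX (x : 𝒳) : ℝ≥0∞ := ∑' u, ∑' r, p u r x

theorem tsum_marginalR : ∑' r, marginalR p r = ∑' u, ∑' r, ∑' x, p u r x :=
  ENNReal.tsum_comm

theorem tsum_marginalX : ∑' x, marginalX p x = ∑' u, ∑' r, ∑' x, p u r x := by
  unfold marginalX
  rw [ENNReal.tsum_comm]
  exact tsum_congr fun u ↦ ENNReal.tsum_comm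

variable {p}

theorem marginalR_ne_top (hp : ∑' u, ∑' r, ∑' x, p u r x = 1) (r : ℛ) : marginalR p r ≠ ∞ :=
  ENNReal.ne_top_of_tsum_ne_top ((tsum_marginalR p).trans hp ▸ ENNReal.one_ne_top) r

theorem marginalX_ne_top (hp : ∑' u, ∑' r, ∑' x, p u r x = 1) (x : 𝒳) : marginalX p x ≠ ∞ :=
  ENNReal.ne_top_of_tsum_ne_top ((tsum_marginalX p).trans hp ▸ ENNReal.one_ne_top) x

variable [DecidableEq 𝒰]

theorem eq_ite_marginalR_mul_marginalX
    (hIXR : ∀ r x, ∑' u, p u r x = marginalR p r * marginalX p x)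
    {g : 𝒳 → ℛ → 𝒰} (hg : ∀ u r x, p u r x ≠ 0 → u = g x r) (u : 𝒰) (r : ℛ) (x : 𝒳) :
    p u r x = if g x r = u then marginalR p r * marginalX p x else 0 := by
  split_ifs with h
  · rw [← hIXR, tsum_eq_single u fun u' hu' ↦ ?_]
    by_contra h'
    exact hu' ((hg u' r x h').trans h)
  · by_contra h'
    exact h (hg u r x h').symm

theorem tsum_ite_marginalR_eq_marginalU (hp : ∑' u, ∑' r, ∑' x, p u r x = 1)
    (hIUX : ∀ u x, ∑' r, p u r x = marginalU p u * marginalX p x)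
    (hIXR : ∀ r x, ∑' u, p u r x = marginalR p r * marginalX p x)
    {g : 𝒳 → ℛ → 𝒰} (hg : ∀ u r x, p u r x ≠ 0 → u = g x r) (x : 𝒳) (hx : marginalX p x ≠ 0)
    (u : 𝒰) : ∑' r, (if g x r = u then marginalR p r else 0) = marginalU p u := by
  refine (ENNReal.mul_left_inj hx (marginalX_ne_top hp x)).mp ?_
  simp_rw [← hIUX, ← ENNReal.tsum_mul_right, ite_mul, zero_mul,
    ← eq_ite_marginalR_mul_marginalX hIXR hg]

theorem tsum_ite_marginalX_eq_marginalU (hp : ∑' u, ∑' r, ∑' x, p u r x = 1)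
    (hIUR : ∀ u r, ∑' x, p u r x = marginalU p u * marginalR p r)
    (hIXR : ∀ r x, ∑' u, p u r x = marginalR p r * marginalX p x)
    {g : 𝒳 → ℛ → 𝒰} (hg : ∀ u r x, p u r x ≠ 0 → u = g x r) (r : ℛ) (hr : marginalR p r ≠ 0)
    (u : 𝒰) : ∑' x, (if g x r = u then marginalX p x else 0) = marginalU p u := by
  refine (ENNReal.mul_left_inj hr (marginalR_ne_top hp r)).mp ?_
  simp_rw [← hIUR, ← ENNReal.tsum_mul_right, ite_mul, zero_mul, mul_comm (marginalX p _),
    ← eq_ite_marginalR_mul_marginalX hIXR hg]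

end JointLaw

theorem stmt_17_general {𝒰 ℛ 𝒳 : Type*}
    (p : 𝒰 → ℛ → 𝒳 → ℝ≥0∞)
    (hsum : ∑' u, ∑' r, ∑' x, p u r x = 1)
    -- `I(U;X) = 0`
    (hIUX : ∀ u x, (∑' r, p u r x)
      = (∑' r, ∑' x', p u r x') * (∑' u', ∑' r, p u' r x))
    -- `I(U;R) = 0`
    (hIUR : ∀ u r, (∑' x, p u r x)
      = (∑' r', ∑' x, p u r' x) * (∑' u', ∑' x, p u' r x))
    -- `I(X;R) = 0`
    (hIXR : ∀ r x, (∑' u, p u r x)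
      = (∑' u, ∑' x', p u r x') * (∑' u, ∑' r', p u r' x))
    -- `H(U|XR) = 0` : `U = g(X,R)` almost surely
    (hdet : ∃ g : 𝒳 → ℛ → 𝒰, ∀ u r x, p u r x ≠ 0 → u = g x r)
    -- some message probability is irrational
    (hirr : ∃ u, Irrational ((∑' r, ∑' x, p u r x).toReal)) :
    ¬ {x : 𝒳 | (∑' u, ∑' r, p u r x) ≠ 0}.Finite
    ∧ ¬ {r : ℛ | (∑' u, ∑' x, p u r x) ≠ 0}.Finite := by
  classical
  obtain ⟨g, hg⟩ := hdet
  obtain ⟨u₀, hu₀⟩ := hirr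
  have hX : ∑' x, marginalX p x = 1 := (tsum_marginalX p).trans hsum
  have hR : ∑' r, marginalR p r = 1 := (tsum_marginalR p).trans hsum
  have hrowX := tsum_ite_marginalR_eq_marginalU hsum hIUX hIXR hg
  have hrowR := tsum_ite_marginalX_eq_marginalU hsum hIUR hIXR hg
  refine ⟨fun hfin ↦ ?_, fun hfin ↦ ?_⟩
  · exact not_irrational_toReal_of_support_finite (marginalX p) (marginalR p)
      (fun x r ↦ g x r = u₀) _ hX hR (fun x hx ↦ hrowX x hx u₀) (fun r hr ↦ hrowR r hr u₀) hfin hu₀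
  · exact not_irrational_toReal_of_support_finite (marginalR p) (marginalX p)
      (fun r x ↦ g x r = u₀) _ hR hX (fun r hr ↦ hrowR r hr u₀) (fun x hx ↦ hrowX x hx u₀) hfin hu₀

/-- If `U, R, X` satisfy `I(U;X) = I(U;R) = I(X;R) = 0` and `H(U|XR) = 0`, and
some probability mass `P_U(u)` is irrational, then neither the support of `X`
nor the support of `R` can be finite. -/
theorem stmt_17 {𝒰 ℛ 𝒳 : Type*} [Countable 𝒰] [Countable ℛ] [Countable 𝒳]
    (p : 𝒰 → ℛ → 𝒳 → ℝ≥0∞)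
    (hsum : ∑' u, ∑' r, ∑' x, p u r x = 1)
    -- `I(U;X) = 0`
    (hIUX : ∀ u x, (∑' r, p u r x)
      = (∑' r, ∑' x', p u r x') * (∑' u', ∑' r, p u' r x))
    -- `I(U;R) = 0`
    (hIUR : ∀ u r, (∑' x, p u r x)
      = (∑' r', ∑' x, p u r' x) * (∑' u', ∑' x, p u' r x))
    -- `I(X;R) = 0`
    (hIXR : ∀ r x, (∑' u, p u r x)
      = (∑' u, ∑' x', p u r x') * (∑' u, ∑' r', p u r' x))
    -- `H(U|XR) = 0` : `U = g(X,R)` almost surely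
    (hdet : ∃ g : 𝒳 → ℛ → 𝒰, ∀ u r x, p u r x ≠ 0 → u = g x r)
    -- some message probability is irrational
    (hirr : ∃ u, Irrational ((∑' r, ∑' x, p u r x).toReal)) :
    ¬ {x : 𝒳 | (∑' u, ∑' r, p u r x) ≠ 0}.Finite
    ∧ ¬ {r : ℛ | (∑' u, ∑' x, p u r x) ≠ 0}.Finite :=
  stmt_17_general p hsum hIUX hIUR hIXR hdet hirr
end

section
/- Let (R,U,X) be an error-free perfect secrecy system with H(X) = log|𝒰|. Then X is a deterministic function of (U,R) (i.e., H(X|U,R)=0) and I(R;U,X) = log|𝒰|. -/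
/-!
For `u` in the support of `U`, independence of `U` and `X` together with the decoder `g` bounds
`P(X = x)` by the `R`-mass of the fibre `{r | g r x = u}`. These fibres are disjoint, so
`|supp U| · P(X = x) ≤ 1` for every `x`; hence `H(X) ≥ log |supp U|`, and equality forces
`P(X = x) = 1 / |supp U|` on the support of `X` and makes every bound tight:
`p(u,r,x) = P(U = u) P(R = r) = P(U = u, R = r)` whenever it is nonzero, so `X` is a function of
`(U, R)`. The mutual information then follows from `H(U,X) = H(U) + H(X)` and
`H(U,R) = H(U) + H(R)`.
-/

open Finset Real

lemma ent_prod_mul {α β : Type*} [Fintype α] [Fintype β] (f : α → ℝ) (h : β → ℝ)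
    (hf : ∑ a, f a = 1) (hh : ∑ b, h b = 1) :
    ent (fun t : α × β => f t.1 * h t.2) = ent f + ent h := by
  have key : ∀ a, ∑ b, (h b * negMulLog (f a) + f a * negMulLog (h b))
      = negMulLog (f a) + f a * ∑ b, negMulLog (h b) := fun a => by
    rw [sum_add_distrib, ← sum_mul, ← mul_sum, hh, one_mul]
  simp only [ent, Fintype.sum_prod_type, negMulLog_mul, key]
  rw [sum_add_distrib, ← sum_mul, hf, one_mul]

lemma sum_negMulLog_eq_negMulLog_sum {α : Type*} [Fintype α] {q : α → ℝ}
    (h : ∀ a, q a ≠ 0 → q a = ∑ b, q b) :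
    ∑ a, negMulLog (q a) = negMulLog (∑ a, q a) := by
  have hterm : ∀ a, negMulLog (q a) = q a * -log (∑ b, q b) := fun a => by
    by_cases ha : q a = 0
    · simp [ha]
    · rw [negMulLog, ← h a ha]; ring
  rw [sum_congr rfl fun a _ => hterm a, ← sum_mul, negMulLog]
  ring

lemma mul_eq_one_of_ent_eq_log {α : Type*} [Fintype α] {q : α → ℝ} {N : ℝ} (hN : 0 < N)
    (hq : ∀ a, 0 ≤ q a) (hq1 : ∑ a, q a = 1) (hle : ∀ a, N * q a ≤ 1)
    (hent : ent q = log N) {a : α} (ha : q a ≠ 0) : N * q a = 1 := by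
  have hterm : ∀ a, negMulLog (q a) - q a * log N = -(q a * log (N * q a)) := fun a => by
    by_cases ha : q a = 0
    · simp [ha]
    · rw [negMulLog, log_mul hN.ne' ha]; ring
  have hnonneg : ∀ a, 0 ≤ -(q a * log (N * q a)) := fun a =>
    neg_nonneg.2 (mul_nonpos_of_nonneg_of_nonpos (hq a)
      (log_nonpos (mul_nonneg hN.le (hq a)) (hle a)))
  have hsum : ∑ a, -(q a * log (N * q a)) = 0 := by
    simp_rw [← hterm]
    rw [sum_sub_distrib, ← sum_mul, hq1, one_mul, ← ent, hent, sub_self]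
  have hzero := (sum_eq_zero_iff_of_nonneg fun a _ => hnonneg a).1 hsum a (mem_univ a)
  rw [neg_eq_zero, mul_eq_zero, or_iff_right ha] at hzero
  exact eq_one_of_pos_of_log_eq_zero (mul_pos hN ((hq a).lt_of_ne' ha)) hzero

/-- `p` is the joint mass function of `(U, R, X)`: `indep_UX` and `indep_UR` say
`I(U;X) = I(U;R) = 0`, and `decode` says `H(U|R,X) = 0`, with decoder `g`. -/
structure IsErrorFreePerfectSecrecy {𝒰 ℛ 𝒳 : Type*} [Fintype 𝒰] [Fintype ℛ] [Fintype 𝒳]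
    (p : 𝒰 → ℛ → 𝒳 → ℝ) (g : ℛ → 𝒳 → 𝒰) : Prop where
  nonneg : ∀ u r x, 0 ≤ p u r x
  sum_eq_one : ∑ u, ∑ r, ∑ x, p u r x = 1
  indep_UX : ∀ u x, ∑ r, p u r x = (∑ r, ∑ x', p u r x') * ∑ u', ∑ r, p u' r x
  indep_UR : ∀ u r, ∑ x, p u r x = (∑ r', ∑ x, p u r' x) * ∑ u', ∑ x, p u' r x
  decode : ∀ u r x, p u r x ≠ 0 → u = g r x

namespace IsErrorFreePerfectSecrecy

variable {𝒰 ℛ 𝒳 : Type*} [Fintype 𝒰] [Fintype ℛ] [Fintype 𝒳]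
  {p : 𝒰 → ℛ → 𝒳 → ℝ} {g : ℛ → 𝒳 → 𝒰}

lemma marginal_U_nonneg (h : IsErrorFreePerfectSecrecy p g) (u : 𝒰) :
    0 ≤ ∑ r, ∑ x, p u r x :=
  sum_nonneg fun r _ => sum_nonneg fun x _ => h.nonneg u r x

lemma marginal_R_nonneg (h : IsErrorFreePerfectSecrecy p g) (r : ℛ) :
    0 ≤ ∑ u, ∑ x, p u r x :=
  sum_nonneg fun u _ => sum_nonneg fun x _ => h.nonneg u r x

lemma marginal_X_nonneg (h : IsErrorFreePerfectSecrecy p g) (x : 𝒳) :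
    0 ≤ ∑ u, ∑ r, p u r x :=
  sum_nonneg fun u _ => sum_nonneg fun r _ => h.nonneg u r x

lemma sum_marginal_R (h : IsErrorFreePerfectSecrecy p g) : ∑ r, ∑ u, ∑ x, p u r x = 1 := by
  rw [sum_comm]; exact h.sum_eq_one

lemma sum_marginal_X (h : IsErrorFreePerfectSecrecy p g) : ∑ x, ∑ u, ∑ r, p u r x = 1 := by
  rw [← h.sum_eq_one, sum_comm]
  exact sum_congr rfl fun u _ => sum_comm

lemma le_ite [DecidableEq 𝒰] (h : IsErrorFreePerfectSecrecy p g) (u : 𝒰) (r : ℛ) (x : 𝒳) :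
    p u r x ≤ if u = g r x then (∑ r', ∑ x', p u r' x') * ∑ u', ∑ x', p u' r x' else 0 := by
  split_ifs with hu
  · rw [← h.indep_UR]
    exact single_le_sum (fun x' _ => h.nonneg u r x') (mem_univ x)
  · exact (not_ne_iff.1 (mt (h.decode u r x) hu)).le

lemma marginal_X_le_fiber [DecidableEq 𝒰] (h : IsErrorFreePerfectSecrecy p g) {u : 𝒰}
    (hu : ∑ r, ∑ x, p u r x ≠ 0) (x : 𝒳) :
    ∑ u', ∑ r, p u' r x ≤ ∑ r, if u = g r x then ∑ u', ∑ x', p u' r x' else 0 := by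
  refine le_of_mul_le_mul_left ?_ ((h.marginal_U_nonneg u).lt_of_ne' hu)
  calc (∑ r, ∑ x, p u r x) * ∑ u', ∑ r, p u' r x
      = ∑ r, p u r x := (h.indep_UX u x).symm
    _ ≤ ∑ r, if u = g r x then (∑ r', ∑ x', p u r' x') * ∑ u', ∑ x', p u' r x' else 0 :=
      sum_le_sum fun r _ => h.le_ite u r x
    _ = _ := by
      rw [mul_sum]
      exact sum_congr rfl fun r _ => by split_ifs <;> simp

lemma sum_fiber_le_one [DecidableEq 𝒰] (h : IsErrorFreePerfectSecrecy p g) (s : Finset 𝒰) (x : 𝒳) :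
    ∑ u ∈ s, ∑ r, (if u = g r x then ∑ u', ∑ x', p u' r x' else 0) ≤ 1 := by
  rw [sum_comm, ← h.sum_marginal_R]
  refine sum_le_sum fun r _ => ?_
  rw [sum_ite_eq']
  split_ifs
  exacts [le_rfl, h.marginal_R_nonneg r]

lemma card_mul_marginal_X_le_one [DecidableEq 𝒰] (h : IsErrorFreePerfectSecrecy p g) (s : Finset 𝒰)
    (hs : ∀ u ∈ s, ∑ r, ∑ x, p u r x ≠ 0) (x : 𝒳) :
    #s * ∑ u, ∑ r, p u r x ≤ 1 :=
  calc (#s : ℝ) * ∑ u, ∑ r, p u r x = ∑ _u ∈ s, ∑ u, ∑ r, p u r x := by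
        rw [sum_const, nsmul_eq_mul]
    _ ≤ ∑ u ∈ s, ∑ r, (if u = g r x then ∑ u', ∑ x', p u' r x' else 0) :=
        sum_le_sum fun u hu => h.marginal_X_le_fiber (hs u hu) x
    _ ≤ 1 := h.sum_fiber_le_one s x

lemma eq_mul_of_ne_zero (h : IsErrorFreePerfectSecrecy p g) (s : Finset 𝒰)
    (hs : ∀ u, u ∈ s ↔ ∑ r, ∑ x, p u r x ≠ 0)
    (hX : ent (fun x => ∑ u, ∑ r, p u r x) = log #s) {u : 𝒰} {r : ℛ} {x : 𝒳}
    (hp : p u r x ≠ 0) :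
    p u r x = (∑ r', ∑ x', p u r' x') * ∑ u', ∑ x', p u' r x' := by
  classical
  have hpos := (h.nonneg u r x).lt_of_ne' hp
  have hu : u ∈ s := (hs u).2 fun h0 => by
    have := h.le_ite u r x
    rw [if_pos (h.decode u r x hp), h0, zero_mul] at this
    linarith
  have hx : ∑ u', ∑ r', p u' r' x ≠ 0 := fun h0 => by
    have := single_le_sum (fun r' _ => h.nonneg u r' x) (mem_univ r)
    rw [h.indep_UX, h0, mul_zero] at this
    linarith
  have hmem : ∀ u' ∈ s, ∑ r, ∑ x, p u' r x ≠ 0 := fun u' => (hs u').1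
  have hunif : #s * ∑ u', ∑ r', p u' r' x = 1 :=
    mul_eq_one_of_ent_eq_log (Nat.cast_pos.2 (card_pos.2 ⟨u, hu⟩)) h.marginal_X_nonneg
      h.sum_marginal_X (h.card_mul_marginal_X_le_one s hmem) hX hx
  -- `#s · P(X = x) = 1` makes both bounds behind `card_mul_marginal_X_le_one` tight.
  have hfiber : ∑ u', ∑ r', p u' r' x
      = ∑ r', if u = g r' x then ∑ u', ∑ x', p u' r' x' else 0 := by
    refine (sum_eq_sum_iff_of_le fun u' hu' => h.marginal_X_le_fiber (hmem u' hu') x).1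
      (le_antisymm (sum_le_sum fun u' hu' => h.marginal_X_le_fiber (hmem u' hu') x) ?_) u hu
    rw [sum_const, nsmul_eq_mul, hunif]
    exact h.sum_fiber_le_one s x
  have hrow : ∑ r', p u r' x = ∑ r', if u = g r' x
      then (∑ r'', ∑ x', p u r'' x') * ∑ u', ∑ x', p u' r' x' else 0 := by
    rw [h.indep_UX, hfiber, mul_sum]
    exact sum_congr rfl fun r' _ => by split_ifs <;> simp
  have := (sum_eq_sum_iff_of_le fun r' _ => h.le_ite u r' x).1 hrow r (mem_univ r)
  rwa [if_pos (h.decode u r x hp)] at this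

lemma ent_UR (h : IsErrorFreePerfectSecrecy p g) :
    ent (fun t : 𝒰 × ℛ => ∑ x, p t.1 t.2 x)
      = ent (fun u => ∑ r, ∑ x, p u r x) + ent (fun r => ∑ u, ∑ x, p u r x) := by
  rw [show (fun t : 𝒰 × ℛ => ∑ x, p t.1 t.2 x) = fun t => _ * _ from
    funext fun t => h.indep_UR t.1 t.2]
  exact ent_prod_mul _ _ h.sum_eq_one h.sum_marginal_R

lemma ent_UX (h : IsErrorFreePerfectSecrecy p g) :
    ent (fun t : 𝒰 × 𝒳 => ∑ r, p t.1 r t.2)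
      = ent (fun u => ∑ r, ∑ x, p u r x) + ent (fun x => ∑ u, ∑ r, p u r x) := by
  rw [show (fun t : 𝒰 × 𝒳 => ∑ r, p t.1 r t.2) = fun t => _ * _ from
    funext fun t => h.indep_UX t.1 t.2]
  exact ent_prod_mul _ _ h.sum_eq_one h.sum_marginal_X

lemma ent_URX_eq_ent_UR (h : IsErrorFreePerfectSecrecy p g) (s : Finset 𝒰)
    (hs : ∀ u, u ∈ s ↔ ∑ r, ∑ x, p u r x ≠ 0)
    (hX : ent (fun x => ∑ u, ∑ r, p u r x) = log #s) :
    ent (fun t : 𝒰 × ℛ × 𝒳 => p t.1 t.2.1 t.2.2) = ent (fun t : 𝒰 × ℛ => ∑ x, p t.1 t.2 x) := by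
  simp only [ent, Fintype.sum_prod_type]
  refine sum_congr rfl fun u _ => sum_congr rfl fun r _ =>
    sum_negMulLog_eq_negMulLog_sum fun x hp => ?_
  rw [h.indep_UR]
  exact h.eq_mul_of_ne_zero s hs hX hp

end IsErrorFreePerfectSecrecy

open scoped Classical in
/-- If an error-free perfect secrecy system has `H(X) = log|𝒰|` (minimal
number of channel uses), then `X` is a deterministic function of `(U,R)`
(`H(X|U,R) = 0`) and `I(R;U,X) = log|𝒰|`. -/
theorem stmt_18 {𝒰 ℛ 𝒳 : Type*} [Fintype 𝒰] [Fintype ℛ] [Fintype 𝒳]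
    (p : 𝒰 → ℛ → 𝒳 → ℝ)
    (hnn : ∀ u r x, 0 ≤ p u r x)
    (hsum : ∑ u, ∑ r, ∑ x, p u r x = 1)
    (hIUX : ∀ u x, (∑ r, p u r x)
      = (∑ r, ∑ x', p u r x') * (∑ u', ∑ r, p u' r x))
    (hIUR : ∀ u r, (∑ x, p u r x)
      = (∑ r', ∑ x, p u r' x) * (∑ u', ∑ x, p u' r x))
    (hdet : ∃ g : ℛ → 𝒳 → 𝒰, ∀ u r x, p u r x ≠ 0 → u = g r x)
    -- `H(X) = log |𝒰|`
    (hHX : ent (fun x : 𝒳 => ∑ u, ∑ r, p u r x)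
      = Real.log ((univ.filter fun u => (∑ r, ∑ x, p u r x) ≠ 0).card)) :
    -- `H(X|U,R) = 0` : `X` is a deterministic function of `(U,R)`
    (ent (fun t : 𝒰 × ℛ × 𝒳 => p t.1 t.2.1 t.2.2)
        - ent (fun t : 𝒰 × ℛ => ∑ x, p t.1 t.2 x) = 0)
    -- `I(R;U,X) = log |𝒰|`
    ∧ (ent (fun r : ℛ => ∑ u, ∑ x, p u r x)
        + ent (fun t : 𝒰 × 𝒳 => ∑ r, p t.1 r t.2)
        - ent (fun t : 𝒰 × ℛ × 𝒳 => p t.1 t.2.1 t.2.2)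
      = Real.log ((univ.filter fun u => (∑ r, ∑ x, p u r x) ≠ 0).card)) := by
  obtain ⟨g, hg⟩ := hdet
  have h : IsErrorFreePerfectSecrecy p g := ⟨hnn, hsum, hIUX, hIUR, hg⟩
  have hXUR := h.ent_URX_eq_ent_UR _ (fun u => by simp) hHX
  refine ⟨sub_eq_zero.2 hXUR, ?_⟩
  rw [hXUR, h.ent_UR, h.ent_UX, ← hHX]
  ring
end
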